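/- arXiv:2301.08547 — 2 statements merged into one kernel-verified Lean document; each statement's English description precedes it below -/
import Mathlib

section
/- Let r ≥ 1 be an integer, ε > 0, and let B_r = {x ∈ V : d_G(0,x) ≤ r} be the ball of radius r about 0 in the graph metric. Suppose every vertex of G has degree at most 6 and that 2εr ≤ R_eff(0, V∖B_r) ≤ r. Then the expected number of collisions of two independent simple random walks on G killed upon exiting B_r, both started at 0, satisfies εr ≤ E_{0,0}(Z_{B_r}) ≤ 6r. -/
open MeasureTheory ENNReal
open scoped Classical

noncomputable section

variable {V : Type*}

/-- The cemetery-extended state space `B ∪ {†}` carries the discrete σ-algebra. -/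
instance : MeasurableSpace (Option V) := ⊤

/-- One-step transition probabilities of the simple random walk on `G` killed
upon exiting `B`; the cemetery state `†` is `none`. -/
def killedStep (G : SimpleGraph V) [G.LocallyFinite] (B : Set V) :
    Option V → Option V → ℝ≥0∞
  | some x, some y =>
      if x ∈ B ∧ G.Adj x y ∧ y ∈ B then ((G.degree x : ℝ≥0∞))⁻¹ else 0
  | some x, none =>
      if x ∈ B then
        (((G.neighborFinset x).filter (fun y => y ∉ B)).card : ℝ≥0∞) / (G.degree x : ℝ≥0∞)
      else 1
  | none, some _ => 0
  | none, none => 1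

/-- Probability that the killed walk started at `a` follows `w` for its first `n` steps. -/
def killedCylProb (G : SimpleGraph V) [G.LocallyFinite] (B : Set V) (a : V)
    {n : ℕ} (w : Fin (n + 1) → Option V) : ℝ≥0∞ :=
  (if w 0 = some a then 1 else 0) *
    ∏ i : Fin n, killedStep G B (w i.castSucc) (w i.succ)

/-- `μ` is the law of the simple random walk on `G` killed upon exiting `B`, started at `a`:
it is a probability measure on trajectories with the correct finite-dimensional
distributions. -/
def IsKilledWalkLaw (G : SimpleGraph V) [G.LocallyFinite] (B : Set V)
    (a : V) (μ : Measure (ℕ → Option V)) : Prop :=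
  IsProbabilityMeasure μ ∧
    ∀ (n : ℕ) (w : Fin (n + 1) → Option V),
      μ {ω | ∀ i : Fin (n + 1), ω i = w i} = killedCylProb G B a w

/-- `ν` is the joint law of two independent killed walks started at `a` and `b`. -/
def IsKilledPairLaw (G : SimpleGraph V) [G.LocallyFinite] (B : Set V)
    (a b : V) (ν : Measure (ℕ → Option V × Option V)) : Prop :=
  IsProbabilityMeasure ν ∧
    ∀ (n : ℕ) (w : Fin (n + 1) → Option V × Option V),
      ν {ω | ∀ i : Fin (n + 1), ω i = w i} =
        killedCylProb G B a (fun i => (w i).1) * killedCylProb G B b (fun i => (w i).2)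

/-- The number of collisions `Z_B = Σ_{n ≥ 0} 1(Xₙ = Yₙ ∈ B)` of the two coordinate
walks along a trajectory. -/
def collisions (B : Set V) (ω : ℕ → Option V × Option V) : ℝ≥0∞ :=
  ∑' n : ℕ, if ∃ x ∈ B, (ω n).1 = some x ∧ (ω n).2 = some x then 1 else 0

/-- The Dirichlet energy `ℰ(f,f) = (1/2) Σ_{x∼y} (f x - f y)²` of `f : V → ℝ`. -/
def energy (G : SimpleGraph V) (f : V → ℝ) : ℝ≥0∞ :=
  (1 / 2) * ∑' p : V × V,
    if G.Adj p.1 p.2 then ENNReal.ofReal ((f p.1 - f p.2) ^ 2) else 0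

/-- The effective resistance between `A₁` and `A₂` in `G`, every edge being a unit
resistor: its inverse is the infimum of the energies of finite-energy functions
that are `1` on `A₁` and `0` on `A₂`. -/
def effRes (G : SimpleGraph V) (A₁ A₂ : Set V) : ℝ≥0∞ :=
  (⨅ f ∈ {f : V → ℝ | energy G f ≠ ⊤ ∧ (∀ x ∈ A₁, f x = 1) ∧ ∀ x ∈ A₂, f x = 0},
    energy G f)⁻¹

namespace FMB
open Finset

variable (G : SimpleGraph V) [G.LocallyFinite] (Bf : Finset V)

def CC : Finset (Option V) := insert none (Bf.image some)

lemma none_mem_CC : none ∈ CC Bf := Finset.mem_insert_self _ _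

lemma some_mem_CC {x : V} (hx : x ∈ Bf) : some x ∈ CC Bf :=
  Finset.mem_insert_of_mem (Finset.mem_image_of_mem _ hx)

lemma sumC {M : Type*} [AddCommMonoid M] (F : Option V → M) :
    ∑ t ∈ CC Bf, F t = F none + ∑ x ∈ Bf, F (some x) := by
  rw [CC, Finset.sum_insert (by simp), Finset.sum_image (by intros _ _ _ _ h; simpa using h)]

def KK : ℕ → Option V → Option V → ℝ≥0∞
  | 0, s, t => if s = t then 1 else 0
  | (n+1), s, t => ∑ u ∈ CC Bf, killedStep G ↑Bf s u * KK n u t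

lemma KK_zero (s t : Option V) : KK G Bf 0 s t = if s = t then 1 else 0 := rfl

lemma KK_succ (n : ℕ) (s t : Option V) :
    KK G Bf (n+1) s t = ∑ u ∈ CC Bf, killedStep G ↑Bf s u * KK G Bf n u t := rfl

lemma step_none (t : Option V) :
    killedStep G ↑Bf none t = if t = none then 1 else 0 := by
  cases t <;> simp [killedStep]

lemma KK_none (n : ℕ) (t : Option V) :
    KK G Bf n none t = if t = none then 1 else 0 := by
  induction n with
  | zero => cases t <;> simp [KK_zero]
  | succ n ih =>
    rw [KK_succ, sumC]
    simp [step_none, ih]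

lemma step_outside {x : V} (hx : x ∉ Bf) (y : V) :
    killedStep G ↑Bf (some x) (some y) = 0 := by
  simp [killedStep, hx]

lemma KK_outside {x : V} (hx : x ∉ Bf) {y : V} (hy : y ∈ Bf) (n : ℕ) :
    KK G Bf n (some x) (some y) = 0 := by
  induction n with
  | zero =>
    have : x ≠ y := fun h => hx (h ▸ hy)
    simp [KK_zero, this]
  | succ n ih =>
    rw [KK_succ, sumC]
    simp [step_outside G Bf hx, KK_none]

lemma step_row {x : V} (hx : x ∈ Bf) (hd : 0 < G.degree x) :
    ∑ t ∈ CC Bf, killedStep G ↑Bf (some x) t = 1 := by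
  rw [sumC]
  have hxB : x ∈ (↑Bf : Set V) := hx
  have h2 : ∀ y ∈ Bf, killedStep G ↑Bf (some x) (some y)
      = if G.Adj x y then ((G.degree x : ℝ≥0∞))⁻¹ else 0 := by
    intro y hy
    by_cases h : G.Adj x y <;> simp [killedStep, hxB, h, hy]
  rw [Finset.sum_congr rfl h2, ← Finset.sum_filter, Finset.sum_const]
  have hcard : (Bf.filter (fun y => G.Adj x y)).card
      = ((G.neighborFinset x).filter (fun y => y ∈ (↑Bf : Set V))).card := by
    congr 1
    ext y
    simp [SimpleGraph.mem_neighborFinset, and_comm]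
  have hsplit : ((G.neighborFinset x).filter (fun y => y ∈ (↑Bf : Set V))).card
      + ((G.neighborFinset x).filter (fun y => y ∉ (↑Bf : Set V))).card = G.degree x := by
    rw [Finset.card_filter_add_card_filter_not]
    rfl
  have hstep : killedStep G ↑Bf (some x) none
      = (((G.neighborFinset x).filter (fun y => y ∉ (↑Bf : Set V))).card : ℝ≥0∞)
        / (G.degree x : ℝ≥0∞) := by
    simp [killedStep, hxB]
  rw [hstep, hcard, div_eq_mul_inv, nsmul_eq_mul, ← add_mul]
  rw [← Nat.cast_add]
  rw [add_comm ((((G.neighborFinset x).filter (fun y => y ∉ (↑Bf : Set V))).card)) _, hsplit]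
  exact ENNReal.mul_inv_cancel (by exact_mod_cast hd.ne') (by simp)

lemma step_row' (hdeg : ∀ x ∈ Bf, 0 < G.degree x) {s : Option V} (hs : s ∈ CC Bf) :
    ∑ t ∈ CC Bf, killedStep G ↑Bf s t = 1 := by
  cases s with
  | none => rw [sumC]; simp [step_none]
  | some x =>
    have hx : x ∈ Bf := by
      rcases Finset.mem_insert.1 hs with h | h
      · exact absurd h (by simp)
      · rcases Finset.mem_image.1 h with ⟨y, hy, hxy⟩
        cases hxy; exact hy
    exact step_row G Bf hx (hdeg x hx)

lemma KK_row (hdeg : ∀ x ∈ Bf, 0 < G.degree x) (n : ℕ) {s : Option V} (hs : s ∈ CC Bf) :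
    ∑ t ∈ CC Bf, KK G Bf n s t = 1 := by
  induction n generalizing s with
  | zero =>
    simp only [KK_zero]
    rw [Finset.sum_ite_eq (CC Bf) s (fun _ => (1:ℝ≥0∞))]
    simp [hs]
  | succ n ih =>
    simp only [KK_succ]
    rw [Finset.sum_comm]
    calc ∑ u ∈ CC Bf, ∑ t ∈ CC Bf, killedStep G ↑Bf s u * KK G Bf n u t
        = ∑ u ∈ CC Bf, killedStep G ↑Bf s u * ∑ t ∈ CC Bf, KK G Bf n u t := by
          simp [Finset.mul_sum]
      _ = ∑ u ∈ CC Bf, killedStep G ↑Bf s u := by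
          refine Finset.sum_congr rfl fun u hu => by rw [ih hu, mul_one]
      _ = 1 := step_row' G Bf hdeg hs

lemma KK_le_one (hdeg : ∀ x ∈ Bf, 0 < G.degree x) (n : ℕ) {s t : Option V}
    (hs : s ∈ CC Bf) (ht : t ∈ CC Bf) : KK G Bf n s t ≤ 1 := by
  rw [← KK_row G Bf hdeg n hs]
  exact Finset.single_le_sum (fun _ _ => zero_le) ht

lemma KK_ne_top (hdeg : ∀ x ∈ Bf, 0 < G.degree x) (n : ℕ) {s t : Option V}
    (hs : s ∈ CC Bf) (ht : t ∈ CC Bf) : KK G Bf n s t ≠ ⊤ :=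
  ne_top_of_le_ne_top one_ne_top (KK_le_one G Bf hdeg n hs ht)

lemma KK_CK (m n : ℕ) {s : Option V} (hs : s ∈ CC Bf) (t : Option V) :
    KK G Bf (m + n) s t = ∑ u ∈ CC Bf, KK G Bf m s u * KK G Bf n u t := by
  induction m generalizing s with
  | zero =>
    simp only [Nat.zero_add, KK_zero]
    rw [Finset.sum_congr rfl (fun u _ => by rw [ite_mul, one_mul, zero_mul]),
      Finset.sum_ite_eq (CC Bf) s (fun u => KK G Bf n u t)]
    simp [hs]
  | succ m ih =>
    have : m + 1 + n = (m + n) + 1 := by omega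
    rw [this, KK_succ]
    have : ∀ u ∈ CC Bf, killedStep G ↑Bf s u * KK G Bf (m+n) u t
        = ∑ v ∈ CC Bf, killedStep G ↑Bf s u * (KK G Bf m u v * KK G Bf n v t) := by
      intro u hu
      rw [ih hu, Finset.mul_sum]
    rw [Finset.sum_congr rfl this, Finset.sum_comm]
    refine Finset.sum_congr rfl fun v _ => ?_
    rw [KK_succ, Finset.sum_mul]
    exact Finset.sum_congr rfl fun u _ => by ring

lemma KK_succ' (hdeg : ∀ x ∈ Bf, 0 < G.degree x) (n : ℕ) {s t : Option V}
    (hs : s ∈ CC Bf) (ht : t ∈ CC Bf) :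
    KK G Bf (n+1) s t = ∑ u ∈ CC Bf, KK G Bf n s u * killedStep G ↑Bf u t := by
  rw [KK_CK G Bf n 1 hs t]
  refine Finset.sum_congr rfl fun u hu => ?_
  congr 1
  rw [KK_succ]
  rw [Finset.sum_congr rfl (fun v _ => by rw [KK_zero, mul_ite, mul_one, mul_zero]),
    Finset.sum_ite_eq' (CC Bf) t (fun v => killedStep G ↑Bf u v)]
  simp [ht]


section Rev

lemma deg_ne_zero (hdeg : ∀ x ∈ Bf, 0 < G.degree x) {x : V} (hx : x ∈ Bf) : (G.degree x : ℝ≥0∞) ≠ 0 := by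
  exact_mod_cast (hdeg x hx).ne'

lemma deg_ne_top (x : V) : (G.degree x : ℝ≥0∞) ≠ ⊤ := by simp

lemma deg_mul_step (hdeg : ∀ x ∈ Bf, 0 < G.degree x) {x z : V} (hx : x ∈ Bf) (hz : z ∈ Bf) :
    (G.degree x : ℝ≥0∞) * killedStep G ↑Bf (some x) (some z)
      = if G.Adj x z then 1 else 0 := by
  by_cases h : G.Adj x z
  · have hc : x ∈ (↑Bf : Set V) ∧ G.Adj x z ∧ z ∈ (↑Bf : Set V) := ⟨hx, h, hz⟩
    have hs : killedStep G ↑Bf (some x) (some z) = ((G.degree x : ℝ≥0∞))⁻¹ := by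
      simp only [killedStep]
      exact if_pos hc
    rw [hs, if_pos h]
    exact ENNReal.mul_inv_cancel (deg_ne_zero G Bf hdeg hx) (deg_ne_top G x)
  · simp [killedStep, h]


lemma KK_rev (hdeg : ∀ x ∈ Bf, 0 < G.degree x) (n : ℕ) {x y : V} (hx : x ∈ Bf) (hy : y ∈ Bf) :
    (G.degree x : ℝ≥0∞) * KK G Bf n (some x) (some y)
      = (G.degree y : ℝ≥0∞) * KK G Bf n (some y) (some x) := by
  induction n generalizing x y with
  | zero =>
    by_cases h : x = y
    · subst h; rfl
    · have h' : y ≠ x := fun hh => h hh.symm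
      simp [KK_zero, h, h']
  | succ n ih =>
    have hz0 : killedStep G ↑Bf none (some x) = 0 := rfl
    rw [KK_succ, sumC Bf (fun u => killedStep G ↑Bf (some x) u * KK G Bf n u (some y)),
      KK_none, if_neg (by simp), mul_zero, zero_add, Finset.mul_sum]
    have key : ∀ z ∈ Bf,
        (G.degree x : ℝ≥0∞) * (killedStep G ↑Bf (some x) (some z) * KK G Bf n (some z) (some y))
        = (G.degree y : ℝ≥0∞) * (KK G Bf n (some y) (some z) * killedStep G ↑Bf (some z) (some x)) := by
      intro z hz
      have h1 : (G.degree x : ℝ≥0∞) * killedStep G ↑Bf (some x) (some z)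
          = (G.degree z : ℝ≥0∞) * killedStep G ↑Bf (some z) (some x) := by
        rw [deg_mul_step G Bf hdeg hx hz, deg_mul_step G Bf hdeg hz hx]
        simp [SimpleGraph.adj_comm]
      have h2 : (G.degree z : ℝ≥0∞) * KK G Bf n (some z) (some y)
          = (G.degree y : ℝ≥0∞) * KK G Bf n (some y) (some z) := ih hz hy
      calc (G.degree x : ℝ≥0∞) * (killedStep G ↑Bf (some x) (some z) * KK G Bf n (some z) (some y))
          = ((G.degree x : ℝ≥0∞) * killedStep G ↑Bf (some x) (some z)) * KK G Bf n (some z) (some y) := by ring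
        _ = killedStep G ↑Bf (some z) (some x) * ((G.degree z : ℝ≥0∞) * KK G Bf n (some z) (some y)) := by rw [h1]; ring
        _ = killedStep G ↑Bf (some z) (some x) * ((G.degree y : ℝ≥0∞) * KK G Bf n (some y) (some z)) := by rw [h2]
        _ = (G.degree y : ℝ≥0∞) * (KK G Bf n (some y) (some z) * killedStep G ↑Bf (some z) (some x)) := by ring
    rw [Finset.sum_congr rfl key, ← Finset.mul_sum]
    congr 1
    rw [KK_succ' G Bf hdeg n (some_mem_CC Bf hy) (some_mem_CC Bf hx),
      sumC Bf (fun u => KK G Bf n (some y) u * killedStep G ↑Bf u (some x)), hz0, mul_zero, zero_add]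

lemma KK_rev' (hdeg : ∀ x ∈ Bf, 0 < G.degree x) (n : ℕ) {x o : V} (hx : x ∈ Bf) (ho : o ∈ Bf) :
    KK G Bf n (some x) (some o)
      = ((G.degree x : ℝ≥0∞))⁻¹ * ((G.degree o : ℝ≥0∞) * KK G Bf n (some o) (some x)) := by
  rw [KK_rev G Bf hdeg n ho hx, ← mul_assoc,
    ENNReal.inv_mul_cancel (deg_ne_zero G Bf hdeg hx) (deg_ne_top G x), one_mul]

/-- Identity: `K_{n+n}(o,o) = ∑_{x ∈ Bf} d_o * q_n(x)^2 / d_x`. -/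
lemma KK_diag (hdeg : ∀ x ∈ Bf, 0 < G.degree x) (n : ℕ) {o : V} (ho : o ∈ Bf) :
    KK G Bf (n + n) (some o) (some o)
      = ∑ x ∈ Bf, (G.degree o : ℝ≥0∞) * (KK G Bf n (some o) (some x))^2
          * ((G.degree x : ℝ≥0∞))⁻¹ := by
  rw [KK_CK G Bf n n (some_mem_CC Bf ho) (some o),
    sumC Bf (fun u => KK G Bf n (some o) u * KK G Bf n u (some o))]
  rw [KK_none, if_neg (by simp), mul_zero, zero_add]
  refine Finset.sum_congr rfl fun x hx => ?_
  rw [KK_rev' G Bf hdeg n hx ho]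
  ring

/-- Cross term for odd times. -/
lemma KK_odd_eq (hdeg : ∀ x ∈ Bf, 0 < G.degree x) (n : ℕ) {o : V} (ho : o ∈ Bf) :
    KK G Bf (n + (n+1)) (some o) (some o)
      = ∑ x ∈ Bf, (G.degree o : ℝ≥0∞)
          * (KK G Bf n (some o) (some x) * KK G Bf (n+1) (some o) (some x))
          * ((G.degree x : ℝ≥0∞))⁻¹ := by
  rw [KK_CK G Bf n (n+1) (some_mem_CC Bf ho) (some o),
    sumC Bf (fun u => KK G Bf n (some o) u * KK G Bf (n+1) u (some o))]
  rw [KK_none, if_neg (by simp), mul_zero, zero_add]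
  refine Finset.sum_congr rfl fun x hx => ?_
  rw [KK_rev' G Bf hdeg (n+1) hx ho]
  ring

lemma two_mul_le_sq_add_sq (a b : ℝ≥0∞) : 2 * (a * b) ≤ a^2 + b^2 := by
  rcases eq_or_ne a ⊤ with ha | ha
  · rcases eq_or_ne b 0 with hb | hb
    · simp [hb]
    · subst ha
      have : (⊤ : ℝ≥0∞)^2 = ⊤ := by simp [pow_two]
      simp [this]
  rcases eq_or_ne b ⊤ with hb | hb
  · subst hb
    have : (⊤ : ℝ≥0∞)^2 = ⊤ := by simp [pow_two]
    simp [this]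
  rw [← ENNReal.ofReal_toReal ha, ← ENNReal.ofReal_toReal hb]
  rw [← ENNReal.ofReal_mul (ENNReal.toReal_nonneg), ← ENNReal.ofReal_pow ENNReal.toReal_nonneg,
    ← ENNReal.ofReal_pow ENNReal.toReal_nonneg, ← ENNReal.ofReal_add (by positivity) (by positivity)]
  have h2 : (2 : ℝ≥0∞) = ENNReal.ofReal (2:ℝ) := by simp
  rw [h2, ← ENNReal.ofReal_mul (by norm_num)]
  refine ENNReal.ofReal_le_ofReal ?_
  nlinarith [sq_nonneg (a.toReal - b.toReal)]

/-- Lower estimate for collision terms. -/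
lemma sum_sq_ge (hdeg : ∀ x ∈ Bf, 0 < G.degree x) (n : ℕ) {o : V} (ho : o ∈ Bf) :
    KK G Bf (n + n) (some o) (some o) * ((G.degree o : ℝ≥0∞))⁻¹
      ≤ ∑ x ∈ Bf, (KK G Bf n (some o) (some x))^2 := by
  rw [KK_diag G Bf hdeg n ho]
  rw [Finset.sum_mul]
  refine Finset.sum_le_sum fun x hx => ?_
  have h1 : ((G.degree x : ℝ≥0∞))⁻¹ ≤ 1 := by
    rw [ENNReal.inv_le_one]
    exact_mod_cast (hdeg x hx)
  calc (G.degree o : ℝ≥0∞) * (KK G Bf n (some o) (some x))^2 * ((G.degree x : ℝ≥0∞))⁻¹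
        * ((G.degree o : ℝ≥0∞))⁻¹
      = ((G.degree o : ℝ≥0∞) * ((G.degree o : ℝ≥0∞))⁻¹)
          * ((KK G Bf n (some o) (some x))^2 * ((G.degree x : ℝ≥0∞))⁻¹) := by ring
    _ = (KK G Bf n (some o) (some x))^2 * ((G.degree x : ℝ≥0∞))⁻¹ := by
        rw [ENNReal.mul_inv_cancel (deg_ne_zero G Bf hdeg ho) (deg_ne_top G o), one_mul]
    _ ≤ (KK G Bf n (some o) (some x))^2 * 1 := by
        exact mul_le_mul_right h1 _
    _ = (KK G Bf n (some o) (some x))^2 := by rw [mul_one]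

/-- Upper estimate for collision terms. -/
lemma sum_sq_le (hdeg : ∀ x ∈ Bf, 0 < G.degree x) (hdeg6 : ∀ x : V, G.degree x ≤ 6) (n : ℕ) {o : V} (ho : o ∈ Bf) :
    ∑ x ∈ Bf, (KK G Bf n (some o) (some x))^2
      ≤ 6 * KK G Bf (n + n) (some o) (some o) * ((G.degree o : ℝ≥0∞))⁻¹ := by
  rw [KK_diag G Bf hdeg n ho]
  rw [Finset.mul_sum, Finset.sum_mul]
  refine Finset.sum_le_sum fun x hx => ?_
  have h1 : (1:ℝ≥0∞)/6 ≤ ((G.degree x : ℝ≥0∞))⁻¹ := by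
    rw [one_div, ENNReal.inv_le_inv]
    exact_mod_cast hdeg6 x
  calc (KK G Bf n (some o) (some x))^2
      = (6 * ((G.degree o : ℝ≥0∞) * ((G.degree o : ℝ≥0∞))⁻¹)
        * ((1:ℝ≥0∞)/6 * 6) * 6⁻¹) * (KK G Bf n (some o) (some x))^2 := by
        rw [ENNReal.mul_inv_cancel (deg_ne_zero G Bf hdeg ho) (deg_ne_top G o)]
        rw [ENNReal.div_mul_cancel (by norm_num) (by norm_num)]
        norm_num
        rw [ENNReal.mul_inv_cancel (by norm_num) (by norm_num), one_mul]
    _ ≤ (6 * ((G.degree o : ℝ≥0∞) * ((G.degree o : ℝ≥0∞))⁻¹)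
        * (((G.degree x : ℝ≥0∞))⁻¹ * 6) * 6⁻¹) * (KK G Bf n (some o) (some x))^2 := by
        gcongr
    _ = 6 * ((G.degree o : ℝ≥0∞) * (KK G Bf n (some o) (some x))^2 * ((G.degree x : ℝ≥0∞))⁻¹)
        * ((G.degree o : ℝ≥0∞))⁻¹ * (6 * 6⁻¹) := by ring
    _ = 6 * ((G.degree o : ℝ≥0∞) * (KK G Bf n (some o) (some x))^2 * ((G.degree x : ℝ≥0∞))⁻¹)
        * ((G.degree o : ℝ≥0∞))⁻¹ := by
        rw [ENNReal.mul_inv_cancel (by norm_num) (by norm_num), mul_one]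

/-- Odd–even comparison: `2 K_{2n+1}(o,o) ≤ K_{2n}(o,o) + K_{2n+2}(o,o)`. -/
lemma KK_odd_le (hdeg : ∀ x ∈ Bf, 0 < G.degree x) (n : ℕ) {o : V} (ho : o ∈ Bf) :
    2 * KK G Bf (n + (n+1)) (some o) (some o)
      ≤ KK G Bf (n + n) (some o) (some o) + KK G Bf ((n+1) + (n+1)) (some o) (some o) := by
  rw [KK_odd_eq G Bf hdeg n ho, KK_diag G Bf hdeg n ho, KK_diag G Bf hdeg (n+1) ho,
    Finset.mul_sum, ← Finset.sum_add_distrib]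
  refine Finset.sum_le_sum fun x hx => ?_
  have h := two_mul_le_sq_add_sq (KK G Bf n (some o) (some x)) (KK G Bf (n+1) (some o) (some x))
  calc 2 * ((G.degree o : ℝ≥0∞)
        * (KK G Bf n (some o) (some x) * KK G Bf (n+1) (some o) (some x))
        * ((G.degree x : ℝ≥0∞))⁻¹)
      = (2 * (KK G Bf n (some o) (some x) * KK G Bf (n+1) (some o) (some x)))
        * ((G.degree o : ℝ≥0∞) * ((G.degree x : ℝ≥0∞))⁻¹) := by ring
    _ ≤ ((KK G Bf n (some o) (some x))^2 + (KK G Bf (n+1) (some o) (some x))^2)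
        * ((G.degree o : ℝ≥0∞) * ((G.degree x : ℝ≥0∞))⁻¹) := by
        exact mul_le_mul_left h _
    _ = (G.degree o : ℝ≥0∞) * (KK G Bf n (some o) (some x))^2 * ((G.degree x : ℝ≥0∞))⁻¹
        + (G.degree o : ℝ≥0∞) * (KK G Bf (n+1) (some o) (some x))^2 * ((G.degree x : ℝ≥0∞))⁻¹ := by
        ring
end Rev

/-- cylinder probability with arbitrary initial state. -/
def cylFrom (s : Option V) {n : ℕ} (w : Fin (n + 1) → Option V) : ℝ≥0∞ :=
  (if w 0 = s then 1 else 0) *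
    ∏ i : Fin n, killedStep G ↑Bf (w i.castSucc) (w i.succ)

lemma killedCylProb_eq_cylFrom (a : V) {n : ℕ} (w : Fin (n + 1) → Option V) :
    killedCylProb G ↑Bf a w = cylFrom G Bf (some a) w := rfl

section PiSums
variable {α β : Type*}

lemma sum_piFinset_cons (C : Finset α) (n : ℕ) (F : (Fin (n+1) → α) → ℝ≥0∞) :
    ∑ w ∈ Fintype.piFinset (fun _ : Fin (n+1) => C), F w
      = ∑ a ∈ C, ∑ u ∈ Fintype.piFinset (fun _ : Fin n => C), F (Fin.cons a u) := by
  rw [← Finset.sum_product']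
  refine Finset.sum_nbij' (fun w => (w 0, Fin.tail w)) (fun p => Fin.cons p.1 p.2) ?_ ?_ ?_ ?_ ?_
  · intro w hw
    rw [Fintype.mem_piFinset] at hw
    exact Finset.mk_mem_product (hw 0) (by rw [Fintype.mem_piFinset]; exact fun i => hw i.succ)
  · intro p hp
    rw [Finset.mem_product] at hp
    rw [Fintype.mem_piFinset]
    intro i
    refine Fin.cases ?_ ?_ i
    · simpa using hp.1
    · intro j
      simp only [Fin.cons_succ]
      exact Fintype.mem_piFinset.1 hp.2 j
  · intro w _
    exact Fin.cons_self_tail w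
  · intro p _
    simp [Fin.tail_cons]
  · intro w _
    rw [Fin.cons_self_tail]

lemma sum_piFinset_pair {ι : Type*} [DecidableEq ι] [Fintype ι] (C : Finset α) (D : Finset β)
    (F : (ι → α × β) → ℝ≥0∞) :
    ∑ w ∈ Fintype.piFinset (fun _ : ι => C ×ˢ D), F w
      = ∑ u ∈ Fintype.piFinset (fun _ : ι => C), ∑ v ∈ Fintype.piFinset (fun _ : ι => D),
          F (fun i => (u i, v i)) := by
  rw [← Finset.sum_product']
  refine Finset.sum_nbij' (fun w => (fun i => (w i).1, fun i => (w i).2))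
    (fun p => fun i => (p.1 i, p.2 i)) ?_ ?_ ?_ ?_ ?_
  · intro w hw
    rw [Fintype.mem_piFinset] at hw
    refine Finset.mk_mem_product ?_ ?_ <;> rw [Fintype.mem_piFinset] <;> intro i
    · exact (Finset.mem_product.1 (hw i)).1
    · exact (Finset.mem_product.1 (hw i)).2
  · intro p hp
    rw [Finset.mem_product] at hp
    rw [Fintype.mem_piFinset]
    intro i
    exact Finset.mk_mem_product (Fintype.mem_piFinset.1 hp.1 i) (Fintype.mem_piFinset.1 hp.2 i)
  · intro w _; funext i; rfl
  · intro p _; rfl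
  · intro w _; rfl

end PiSums

lemma sum_cylFrom (n : ℕ) (φ : Option V → ℝ≥0∞) :
    ∀ {s : Option V}, s ∈ CC Bf →
    ∑ w ∈ Fintype.piFinset (fun _ : Fin (n+1) => CC Bf),
        cylFrom G Bf s w * φ (w (Fin.last n))
      = ∑ t ∈ CC Bf, KK G Bf n s t * φ t := by
  induction n with
  | zero =>
    intro s hs
    have hbij : ∑ w ∈ Fintype.piFinset (fun _ : Fin 1 => CC Bf),
        cylFrom G Bf s w * φ (w (Fin.last 0))
        = ∑ a ∈ CC Bf, cylFrom G Bf s (fun _ : Fin 1 => a) * φ a := by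
      refine Finset.sum_nbij' (fun w => w 0) (fun a => fun _ : Fin 1 => a) ?_ ?_ ?_ ?_ ?_
      · intro w hw; exact Fintype.mem_piFinset.1 hw 0
      · intro a ha; rw [Fintype.mem_piFinset]; exact fun _ => ha
      · intro w _; funext i; exact congrArg w (Subsingleton.elim _ _)
      · intro a _; rfl
      · intro w _
        have hw : (fun _ : Fin 1 => w 0) = w := funext fun i => congrArg w (Subsingleton.elim _ _)
        rw [hw]
        have : w (Fin.last 0) = w 0 := congrArg w (Subsingleton.elim _ _)
        rw [this]
    rw [hbij]
    refine Finset.sum_congr rfl fun a _ => ?_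
    congr 1
    unfold cylFrom
    simp [KK_zero, eq_comm]
  | succ n ih =>
    intro s hs
    rw [sum_piFinset_cons]
    have hterm : ∀ a ∈ CC Bf, ∀ u ∈ Fintype.piFinset (fun _ : Fin (n+1) => CC Bf),
        cylFrom G Bf s (Fin.cons a u : Fin (n+2) → Option V)
            * φ ((Fin.cons a u : Fin (n+2) → Option V) (Fin.last (n+1)))
        = (if a = s then 1 else 0) *
            (killedStep G ↑Bf a (u 0) * (cylFrom G Bf (u 0) u * φ (u (Fin.last n)))) := by
      intro a _ u _
      have hlast : (Fin.cons a u : Fin (n+2) → Option V) (Fin.last (n+1)) = u (Fin.last n) := by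
        rw [← Fin.succ_last, Fin.cons_succ]
      have hprod : (∏ i : Fin (n+1),
            killedStep G ↑Bf ((Fin.cons a u : Fin (n+2) → Option V) i.castSucc)
              ((Fin.cons a u : Fin (n+2) → Option V) i.succ))
          = killedStep G ↑Bf a (u 0) *
            ∏ i : Fin n, killedStep G ↑Bf (u i.castSucc) (u i.succ) := by
        rw [Fin.prod_univ_succ]
        have h1 : killedStep G ↑Bf ((Fin.cons a u : Fin (n+2) → Option V) (0 : Fin (n+1)).castSucc)
            ((Fin.cons a u : Fin (n+2) → Option V) (0 : Fin (n+1)).succ)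
            = killedStep G ↑Bf a (u 0) := by simp
        rw [h1]
        refine congrArg (fun z => killedStep G ↑Bf a (u 0) * z) ?_
        refine Finset.prod_congr rfl fun i _ => ?_
        rw [← Fin.succ_castSucc, Fin.cons_succ, Fin.cons_succ]
      unfold cylFrom
      rw [hprod, hlast]
      have h0 : (Fin.cons a u : Fin (n+2) → Option V) 0 = a := by simp
      rw [h0]
      have h00 : (if u 0 = u 0 then (1:ℝ≥0∞) else 0) = 1 := if_pos rfl
      rw [h00, one_mul]
      ring
    rw [Finset.sum_congr rfl (fun a ha => Finset.sum_congr rfl (fun u hu => hterm a ha u hu))]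
    have hcol : ∀ a ∈ CC Bf, ∑ u ∈ Fintype.piFinset (fun _ : Fin (n+1) => CC Bf),
        (if a = s then (1:ℝ≥0∞) else 0) *
          (killedStep G ↑Bf a (u 0) * (cylFrom G Bf (u 0) u * φ (u (Fin.last n))))
        = if a = s then (∑ u ∈ Fintype.piFinset (fun _ : Fin (n+1) => CC Bf),
            killedStep G ↑Bf a (u 0) * (cylFrom G Bf (u 0) u * φ (u (Fin.last n)))) else 0 := by
      intro a _
      rw [← Finset.mul_sum, ite_mul, one_mul, zero_mul]
    rw [Finset.sum_congr rfl hcol, Finset.sum_ite_eq' (CC Bf) s, if_pos hs]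
    have hins : ∀ u ∈ Fintype.piFinset (fun _ : Fin (n+1) => CC Bf),
        killedStep G ↑Bf s (u 0) * (cylFrom G Bf (u 0) u * φ (u (Fin.last n)))
        = ∑ t ∈ CC Bf, (if t = u 0 then
            killedStep G ↑Bf s t * (cylFrom G Bf t u * φ (u (Fin.last n))) else 0) := by
      intro u hu
      rw [Finset.sum_ite_eq' (CC Bf) (u 0), if_pos (Fintype.mem_piFinset.1 hu 0)]
    rw [Finset.sum_congr rfl hins, Finset.sum_comm]
    have hinner : ∀ t ∈ CC Bf,
        ∑ u ∈ Fintype.piFinset (fun _ : Fin (n+1) => CC Bf),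
          (if t = u 0 then killedStep G ↑Bf s t * (cylFrom G Bf t u * φ (u (Fin.last n))) else 0)
        = killedStep G ↑Bf s t * ∑ t' ∈ CC Bf, KK G Bf n t t' * φ t' := by
      intro t ht
      rw [← ih ht, Finset.mul_sum]
      refine Finset.sum_congr rfl fun u _ => ?_
      by_cases h : t = u 0
      · rw [if_pos h]
      · rw [if_neg h]
        have : cylFrom G Bf t u = 0 := by
          unfold cylFrom
          rw [if_neg (fun hh => h hh.symm), zero_mul]
        simp [this]
    rw [Finset.sum_congr rfl hinner]
    have : ∀ t ∈ CC Bf, killedStep G ↑Bf s t * ∑ t' ∈ CC Bf, KK G Bf n t t' * φ t'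
        = ∑ t' ∈ CC Bf, killedStep G ↑Bf s t * KK G Bf n t t' * φ t' := by
      intro t _
      rw [Finset.mul_sum]
      exact Finset.sum_congr rfl fun t' _ => by ring
    rw [Finset.sum_congr rfl this, Finset.sum_comm]
    refine Finset.sum_congr rfl fun t' _ => ?_
    rw [KK_succ, Finset.sum_mul]


lemma sum_pair (n : ℕ) (φ₁ φ₂ : Option V → ℝ≥0∞) {o : V} (ho : o ∈ Bf) :
    ∑ w ∈ Fintype.piFinset (fun _ : Fin (n+1) => (CC Bf) ×ˢ (CC Bf)),
      (killedCylProb G ↑Bf o (fun i => (w i).1) * killedCylProb G ↑Bf o (fun i => (w i).2))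
        * (φ₁ ((w (Fin.last n)).1) * φ₂ ((w (Fin.last n)).2))
    = (∑ t ∈ CC Bf, KK G Bf n (some o) t * φ₁ t)
      * (∑ t ∈ CC Bf, KK G Bf n (some o) t * φ₂ t) := by
  rw [sum_piFinset_pair]
  rw [← sum_cylFrom G Bf n φ₁ (some_mem_CC Bf ho), ← sum_cylFrom G Bf n φ₂ (some_mem_CC Bf ho)]
  rw [Finset.sum_mul_sum]
  refine Finset.sum_congr rfl fun u _ => Finset.sum_congr rfl fun v _ => ?_
  rw [killedCylProb_eq_cylFrom, killedCylProb_eq_cylFrom]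
  ring

section Measure

lemma meas_singleton (p : Option V × Option V) : MeasurableSet {p} := by
  have h : ({p} : Set (Option V × Option V)) = {p.1} ×ˢ {p.2} := by
    rw [Set.singleton_prod_singleton]
  rw [h]
  exact MeasurableSet.prod MeasurableSpace.measurableSet_top MeasurableSpace.measurableSet_top

lemma meas_coord (n : ℕ) (p : Option V × Option V) :
    MeasurableSet {ω : ℕ → Option V × Option V | ω n = p} := by
  have h : {ω : ℕ → Option V × Option V | ω n = p} = (fun ω => ω n) ⁻¹' {p} := rfl
  rw [h]
  exact (measurable_pi_apply n) (meas_singleton p)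

lemma meas_cyl (n : ℕ) (w : Fin (n+1) → Option V × Option V) :
    MeasurableSet {ω : ℕ → Option V × Option V | ∀ i : Fin (n+1), ω i = w i} := by
  have h : {ω : ℕ → Option V × Option V | ∀ i : Fin (n+1), ω i = w i}
      = ⋂ i : Fin (n+1), {ω : ℕ → Option V × Option V | ω i = w i} := by
    ext ω; simp [Set.mem_iInter]
  rw [h]
  exact MeasurableSet.iInter fun i => meas_coord (i : ℕ) (w i)

lemma pdisj (n : ℕ) (W : Finset (Fin (n+1) → Option V × Option V)) :
    Set.PairwiseDisjoint ↑W
      (fun w : Fin (n+1) → Option V × Option V =>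
        {ω : ℕ → Option V × Option V | ∀ i : Fin (n+1), ω i = w i}) := by
  intro w _ w' _ hne
  rw [Function.onFun, Set.disjoint_left]
  intro ω h1 h2
  exact hne (funext fun i => (h1 i).symm.trans (h2 i))

variable {o : V} (ν : Measure (ℕ → Option V × Option V))

lemma nu_total (hdeg : ∀ x ∈ Bf, 0 < G.degree x) (ho : o ∈ Bf)
    (hν : IsKilledPairLaw G ↑Bf o o ν) (n : ℕ) :
    ν (⋃ w ∈ Fintype.piFinset (fun _ : Fin (n+1) => (CC Bf) ×ˢ (CC Bf)),
        {ω : ℕ → Option V × Option V | ∀ i : Fin (n+1), ω i = w i}) = 1 := by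
  rw [measure_biUnion_finset (pdisj n _) (fun w _ => meas_cyl n w)]
  have h1 : ∀ w ∈ Fintype.piFinset (fun _ : Fin (n+1) => (CC Bf) ×ˢ (CC Bf)),
      ν {ω : ℕ → Option V × Option V | ∀ i : Fin (n+1), ω i = w i}
      = (killedCylProb G ↑Bf o (fun i => (w i).1) * killedCylProb G ↑Bf o (fun i => (w i).2))
        * ((fun _ => (1:ℝ≥0∞)) ((w (Fin.last n)).1) * (fun _ => (1:ℝ≥0∞)) ((w (Fin.last n)).2)) := by
    intro w _
    rw [hν.2 n w]
    simp
  rw [Finset.sum_congr rfl h1, sum_pair G Bf n (fun _ => (1:ℝ≥0∞)) (fun _ => (1:ℝ≥0∞)) ho]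
  have h2 : ∑ t ∈ CC Bf, KK G Bf n (some o) t * (1:ℝ≥0∞) = 1 := by
    rw [Finset.sum_congr rfl fun t _ => mul_one _]
    exact KK_row G Bf hdeg n (some_mem_CC Bf ho)
  rw [h2, mul_one]

lemma nu_marginal (hdeg : ∀ x ∈ Bf, 0 < G.degree x) (ho : o ∈ Bf)
    (hν : IsKilledPairLaw G ↑Bf o o ν) (n : ℕ) {x : V} (hx : x ∈ Bf) :
    ν {ω : ℕ → Option V × Option V | ω n = (some x, some x)}
      = KK G Bf n (some o) (some x) * KK G Bf n (some o) (some x) := by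
  classical
  haveI : IsProbabilityMeasure ν := hν.1
  set W := Fintype.piFinset (fun _ : Fin (n+1) => (CC Bf) ×ˢ (CC Bf)) with hW
  set U := ⋃ w ∈ W, {ω : ℕ → Option V × Option V | ∀ i : Fin (n+1), ω i = w i} with hUdef
  set A := {ω : ℕ → Option V × Option V | ω n = (some x, some x)} with hA
  have hUmeas : MeasurableSet U := Finset.measurableSet_biUnion _ (fun w _ => meas_cyl n w)
  have hU1 : ν U = 1 := nu_total G Bf ν hdeg ho hν n
  have hUc : ν Uᶜ = 0 := by
    rw [measure_compl hUmeas (measure_ne_top ν U), hU1, measure_univ, tsub_self]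
  have hAU : ν A = ν (A ∩ U) := by
    refine le_antisymm ?_ (measure_mono Set.inter_subset_left)
    calc ν A ≤ ν (A ∩ U) + ν (A \ U) := measure_le_inter_add_diff ν A U
      _ ≤ ν (A ∩ U) + ν Uᶜ := by
          gcongr
          exact Set.diff_subset_compl A U
      _ = ν (A ∩ U) := by rw [hUc, add_zero]
  have hsplit : A ∩ U = ⋃ w ∈ W.filter
      (fun w => w (Fin.last n) = ((some x : Option V), (some x : Option V))),
      {ω : ℕ → Option V × Option V | ∀ i : Fin (n+1), ω i = w i} := by
    ext ω
    constructor
    · rintro ⟨hωA, hωU⟩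
      rw [Set.mem_iUnion₂] at *
      obtain ⟨w, hwW, hmatch⟩ := hωU
      refine ⟨w, ?_, hmatch⟩
      rw [Finset.mem_filter]
      refine ⟨hwW, ?_⟩
      have := hmatch (Fin.last n)
      rw [Fin.val_last] at this
      rw [← this]
      exact hωA
    · intro hωu
      rw [Set.mem_iUnion₂] at hωu
      obtain ⟨w, hwW, hmatch⟩ := hωu
      rw [Finset.mem_filter] at hwW
      constructor
      · have := hmatch (Fin.last n)
        rw [Fin.val_last] at this
        rw [hA, Set.mem_setOf_eq, this]
        exact hwW.2
      · rw [Set.mem_iUnion₂]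
        exact ⟨w, hwW.1, hmatch⟩
  rw [hAU, hsplit, measure_biUnion_finset ((pdisj n _).subset (by exact_mod_cast Finset.filter_subset _ _))
    (fun w _ => meas_cyl n w), Finset.sum_filter]
  have hterm : ∀ w ∈ W, (if w (Fin.last n) = ((some x : Option V), (some x : Option V))
        then ν {ω : ℕ → Option V × Option V | ∀ i : Fin (n+1), ω i = w i} else 0)
      = (killedCylProb G ↑Bf o (fun i => (w i).1) * killedCylProb G ↑Bf o (fun i => (w i).2))
        * ((fun t => if t = some x then (1:ℝ≥0∞) else 0) ((w (Fin.last n)).1)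
          * (fun t => if t = some x then (1:ℝ≥0∞) else 0) ((w (Fin.last n)).2)) := by
    intro w _
    show _ = _ * ((if (w (Fin.last n)).1 = some x then (1:ℝ≥0∞) else 0)
          * (if (w (Fin.last n)).2 = some x then (1:ℝ≥0∞) else 0))
    by_cases h : w (Fin.last n) = ((some x : Option V), (some x : Option V))
    · rw [if_pos h, hν.2 n w, if_pos (by rw [h]), if_pos (by rw [h]), mul_one, mul_one]
    · rw [if_neg h]
      have : (w (Fin.last n)).1 ≠ some x ∨ (w (Fin.last n)).2 ≠ some x := by
        by_contra hc
        push_neg at hc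
        exact h (Prod.ext hc.1 hc.2)
      rcases this with h1 | h1
      · rw [if_neg h1, zero_mul, mul_zero]
      · rw [if_neg h1, mul_zero, mul_zero]
  rw [Finset.sum_congr rfl hterm, sum_pair G Bf n (fun t => if t = some x then (1:ℝ≥0∞) else 0) (fun t => if t = some x then (1:ℝ≥0∞) else 0) ho]
  have hcollapse : ∑ t ∈ CC Bf, KK G Bf n (some o) t * (if t = some x then (1:ℝ≥0∞) else 0)
      = KK G Bf n (some o) (some x) := by
    rw [Finset.sum_congr rfl (fun t _ => by rw [mul_ite, mul_one, mul_zero]),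
      Finset.sum_ite_eq' (CC Bf) (some x) (KK G Bf n (some o)), if_pos (some_mem_CC Bf hx)]
  rw [hcollapse]

lemma lint_collisions (hdeg : ∀ x ∈ Bf, 0 < G.degree x) (ho : o ∈ Bf)
    (hν : IsKilledPairLaw G ↑Bf o o ν) :
    ∫⁻ ω, collisions ↑Bf ω ∂ν
      = ∑' n : ℕ, ∑ x ∈ Bf, (KK G Bf n (some o) (some x))^2 := by
  have hpt : ∀ ω : ℕ → Option V × Option V, collisions ↑Bf ω
      = ∑' n : ℕ, ∑ x ∈ Bf,
          Set.indicator {ω' : ℕ → Option V × Option V | ω' n = (some x, some x)}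
            (fun _ => (1:ℝ≥0∞)) ω := by
    intro ω
    unfold collisions
    refine tsum_congr fun n => ?_
    have hind : ∀ x : V, Set.indicator
          {ω' : ℕ → Option V × Option V | ω' n = (some x, some x)} (fun _ => (1:ℝ≥0∞)) ω
        = if ω n = (some x, some x) then (1:ℝ≥0∞) else 0 := by
      intro x
      rw [Set.indicator_apply]
      rfl
    rw [Finset.sum_congr rfl fun x _ => hind x]
    by_cases hex : ∃ x ∈ (↑Bf : Set V), (ω n).1 = some x ∧ (ω n).2 = some x
    · obtain ⟨x, hxB, h1, h2⟩ := hex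
      have hx : x ∈ Bf := hxB
      have hωn : ω n = (some x, some x) := Prod.ext h1 h2
      rw [if_pos ⟨x, hxB, h1, h2⟩]
      rw [Finset.sum_eq_single_of_mem x hx]
      · rw [if_pos hωn]
      · intro y _ hyx
        refine if_neg fun h => hyx ?_
        have h2 : (some x : Option V) = some y := congrArg Prod.fst (hωn.symm.trans h)
        exact (Option.some_injective V h2).symm
    · rw [if_neg hex]
      refine (Finset.sum_eq_zero fun y hy => ?_).symm
      refine if_neg fun h => hex ⟨y, hy, ?_, ?_⟩
      · rw [h]
      · rw [h]
  rw [lintegral_congr hpt]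
  rw [lintegral_tsum (fun n => Measurable.aemeasurable ?_)]
  · refine tsum_congr fun n => ?_
    rw [lintegral_finset_sum _ (fun x _ => Measurable.indicator measurable_const (meas_coord n _))]
    refine Finset.sum_congr rfl fun x hx => ?_
    rw [lintegral_indicator_const (meas_coord n (((some x : Option V), (some x : Option V)))),
      one_mul, nu_marginal G Bf ν hdeg ho hν n hx, pow_two]
  · exact Finset.measurable_sum _ (fun x _ =>
      Measurable.indicator measurable_const (meas_coord n _))

end Measure

lemma ball_finite (hconn : G.Connected) (o : V) (r : ℕ) :
    {x : V | G.dist o x ≤ r}.Finite := by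
  induction r with
  | zero =>
    refine Set.Finite.subset (Set.finite_singleton o) ?_
    intro x hx
    have h0 : G.dist o x = 0 := Nat.le_zero.1 hx
    have := (hconn.dist_eq_zero_iff).1 h0
    simp [this.symm]
  | succ r ih =>
    have hsub : {x : V | G.dist o x ≤ r + 1}
        ⊆ {x : V | G.dist o x ≤ r} ∪ ⋃ y ∈ {x : V | G.dist o x ≤ r}, G.neighborSet y := by
      intro x hx
      rw [Set.mem_setOf_eq] at hx
      by_cases hr : G.dist o x ≤ r
      · exact Or.inl hr
      · have hd : G.dist o x = r + 1 := le_antisymm hx (by omega)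
        have hne : x ≠ o := by
          intro h
          subst h
          rw [(hconn.dist_eq_zero_iff).2 rfl] at hd
          omega
        obtain ⟨p, hp⟩ := hconn.exists_walk_length_eq_dist o x
        have hplen : p.length = r + 1 := by rw [hp, hd]
        refine Or.inr ?_
        cases hq : p.reverse with
        | nil =>
          exact absurd (congrArg SimpleGraph.Walk.length hq)
            (by rw [SimpleGraph.Walk.length_reverse, hplen]; simp)
        | @cons _ y _ h q =>
          have hlen : q.length = r := by
            have := congrArg SimpleGraph.Walk.length hq
            rw [SimpleGraph.Walk.length_reverse, hplen, SimpleGraph.Walk.length_cons] at this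
            omega
          have hyball : G.dist o y ≤ r := by
            have := SimpleGraph.dist_le q.reverse
            rw [SimpleGraph.Walk.length_reverse, hlen] at this
            exact this
          refine Set.mem_biUnion hyball ?_
          exact h.symm
    refine Set.Finite.subset (Set.Finite.union ih (Set.Finite.biUnion ih ?_)) hsub
    intro y _
    exact (G.neighborSet y).toFinite

lemma degree_pos (hconn : G.Connected) (hinf : Infinite V) (x : V) : 0 < G.degree x := by
  haveI := hinf
  obtain ⟨y, hy⟩ := exists_ne x
  have hr : G.Reachable x y := hconn.preconnected x y
  obtain ⟨p⟩ := hr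
  rw [SimpleGraph.degree_pos_iff_exists_adj]
  cases p with
  | nil => exact absurd rfl hy
  | cons h q => exact ⟨_, h⟩

lemma step_pos {x u : V} (hx : x ∈ Bf) (hu : u ∈ Bf) (h : G.Adj x u) :
    0 < killedStep G ↑Bf (some x) (some u) := by
  have hc : x ∈ (↑Bf : Set V) ∧ G.Adj x u ∧ u ∈ (↑Bf : Set V) := ⟨hx, h, hu⟩
  have hs : killedStep G ↑Bf (some x) (some u) = ((G.degree x : ℝ≥0∞))⁻¹ := by
    simp only [killedStep]
    exact if_pos hc
  rw [hs]
  simp [ENNReal.inv_pos]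

lemma walk_pos {x z : V} (p : G.Walk x z) (hsupp : ∀ v ∈ p.support, v ∈ Bf) :
    0 < KK G Bf p.length (some x) (some z) := by
  induction p with
  | nil =>
    simp [KK_zero]
  | @cons a b c h q ih =>
    have ha : a ∈ Bf := hsupp a (SimpleGraph.Walk.start_mem_support _)
    have hb : b ∈ Bf := by
      refine hsupp b ?_
      rw [SimpleGraph.Walk.support_cons]
      exact List.mem_cons_of_mem _ (SimpleGraph.Walk.start_mem_support q)
    have hsupp' : ∀ v ∈ q.support, v ∈ Bf := by
      intro v hv
      refine hsupp v ?_
      rw [SimpleGraph.Walk.support_cons]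
      exact List.mem_cons_of_mem _ hv
    rw [SimpleGraph.Walk.length_cons, KK_succ]
    refine lt_of_lt_of_le ?_
      (Finset.single_le_sum (f := fun u => killedStep G ↑Bf (some a) u * KK G Bf q.length u (some c))
        (fun i _ => zero_le) (some_mem_CC Bf hb))
    exact ENNReal.mul_pos (step_pos G Bf ha hb h).ne' (ih hsupp').ne'

lemma geodesic_pos (hconn : G.Connected) {o : V} (r : ℕ)
    (hball : ∀ z : V, z ∈ Bf ↔ G.dist o z ≤ r) {y : V} (hy : y ∈ Bf) :
    0 < KK G Bf (G.dist o y) (some o) (some y) := by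
  obtain ⟨p, hp⟩ := hconn.exists_walk_length_eq_dist o y
  have hsupp : ∀ v ∈ p.support, v ∈ Bf := by
    intro v hv
    rw [hball]
    calc G.dist o v ≤ (p.takeUntil v hv).length := SimpleGraph.dist_le _
      _ ≤ p.length := SimpleGraph.Walk.length_takeUntil_le p hv
      _ = G.dist o y := hp
      _ ≤ r := (hball y).1 hy
  have := walk_pos G Bf p hsupp
  rw [hp] at this
  exact this

/-- Finiteness of the Green function at `y` given finiteness at `o`. -/
lemma green_finite (hconn : G.Connected) {o : V} (ho : o ∈ Bf) (r : ℕ)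
    (hball : ∀ z : V, z ∈ Bf ↔ G.dist o z ≤ r) {y : V} (hy : y ∈ Bf)
    (hG : ∑' m : ℕ, KK G Bf m (some o) (some o) ≠ ⊤) :
    ∑' m : ℕ, KK G Bf m (some y) (some o) ≠ ⊤ := by
  set d := G.dist o y with hd
  set c := KK G Bf d (some o) (some y) with hc
  have hcpos : 0 < c := geodesic_pos G Bf hconn r hball hy
  have hle : ∀ m : ℕ, c * KK G Bf m (some y) (some o) ≤ KK G Bf (d + m) (some o) (some o) := by
    intro m
    rw [KK_CK G Bf d m (some_mem_CC Bf ho) (some o)]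
    exact Finset.single_le_sum
      (f := fun u => KK G Bf d (some o) u * KK G Bf m u (some o))
      (fun i _ => zero_le) (some_mem_CC Bf hy)
  have hsum : c * ∑' m : ℕ, KK G Bf m (some y) (some o)
      ≤ ∑' m : ℕ, KK G Bf m (some o) (some o) := by
    rw [← ENNReal.tsum_mul_left]
    refine le_trans (ENNReal.tsum_le_tsum hle) ?_
    exact tsum_comp_le_tsum_of_injective (add_right_injective d)
      (fun k => KK G Bf k (some o) (some o))
  intro htop
  rw [htop, ENNReal.mul_top hcpos.ne'] at hsum
  exact hG (top_le_iff.1 hsum)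


section RealSide
variable (o : V)

/-- closure of `Bf` by neighbours. -/
def Nf : Finset V := Bf ∪ Bf.biUnion (fun x => G.neighborFinset x)

def E2 : Finset (V × V) := (Nf G Bf ×ˢ Nf G Bf).filter (fun p => G.Adj p.1 p.2)

/-- the real-valued killed kernel toward `o`. -/
def kr (n : ℕ) (x : V) : ℝ := (KK G Bf n (some x) (some o)).toReal

/-- the truncated Green function toward `o`. -/
def hh (m : ℕ) (x : V) : ℝ := ∑ n ∈ Finset.range (m+1), kr G Bf o n x

lemma kr_nonneg (n : ℕ) (x : V) : 0 ≤ kr G Bf o n x := ENNReal.toReal_nonneg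

lemma hh_nonneg (m : ℕ) (x : V) : 0 ≤ hh G Bf o m x :=
  Finset.sum_nonneg fun n _ => kr_nonneg G Bf o n x

lemma kr_outside (ho : o ∈ Bf) {x : V} (hx : x ∉ Bf) (n : ℕ) : kr G Bf o n x = 0 := by
  unfold kr
  rw [KK_outside G Bf hx ho n, ENNReal.toReal_zero]

lemma hh_outside (ho : o ∈ Bf) {x : V} (hx : x ∉ Bf) (m : ℕ) : hh G Bf o m x = 0 :=
  Finset.sum_eq_zero fun n _ => kr_outside G Bf o ho hx n

lemma kr_zero (x : V) : kr G Bf o 0 x = if x = o then 1 else 0 := by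
  unfold kr
  rw [KK_zero]
  by_cases h : x = o
  · simp [h]
  · have : some x ≠ some o := fun hc => h (Option.some_injective V hc)
    simp [h, this]

lemma Bf_subset_Nf : Bf ⊆ Nf G Bf := Finset.subset_union_left

lemma nbr_subset_Nf {x : V} (hx : x ∈ Bf) : G.neighborFinset x ⊆ Nf G Bf := by
  intro y hy
  exact Finset.mem_union_right _ (Finset.mem_biUnion.2 ⟨x, hx, hy⟩)

lemma Nf_filter_adj {x : V} (hx : x ∈ Bf) :
    (Nf G Bf).filter (fun y => G.Adj x y) = G.neighborFinset x := by
  ext y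
  simp only [Finset.mem_filter, SimpleGraph.mem_neighborFinset]
  constructor
  · rintro ⟨_, h⟩; exact h
  · intro h
    exact ⟨nbr_subset_Nf G Bf hx (by rwa [SimpleGraph.mem_neighborFinset]), h⟩

/-- one-step recursion for the real kernel. -/
lemma kr_step (hdeg : ∀ x ∈ Bf, 0 < G.degree x) (ho : o ∈ Bf) (n : ℕ) {x : V} (hx : x ∈ Bf) :
    (G.degree x : ℝ) * kr G Bf o (n+1) x = ∑ y ∈ G.neighborFinset x, kr G Bf o n y := by
  have hE : (G.degree x : ℝ≥0∞) * KK G Bf (n+1) (some x) (some o)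
      = ∑ y ∈ G.neighborFinset x, KK G Bf n (some y) (some o) := by
    rw [KK_succ, sumC Bf (fun u => killedStep G ↑Bf (some x) u * KK G Bf n u (some o))]
    rw [KK_none, if_neg (by simp), mul_zero, zero_add, Finset.mul_sum]
    have h1 : ∀ y ∈ Bf, (G.degree x : ℝ≥0∞)
        * (killedStep G ↑Bf (some x) (some y) * KK G Bf n (some y) (some o))
        = if G.Adj x y then KK G Bf n (some y) (some o) else 0 := by
      intro y hy
      rw [← mul_assoc, deg_mul_step G Bf hdeg hx hy]
      by_cases h : G.Adj x y
      · rw [if_pos h, if_pos h, one_mul]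
      · rw [if_neg h, if_neg h, zero_mul]
    rw [Finset.sum_congr rfl h1, ← Finset.sum_filter]
    refine Finset.sum_subset ?_ ?_
    · intro y hy
      exact (SimpleGraph.mem_neighborFinset G x y).2 (Finset.mem_filter.1 hy).2
    · intro y hy hyn
      refine KK_outside G Bf ?_ ho n
      intro hyBf
      exact hyn (Finset.mem_filter.2 ⟨hyBf, (SimpleGraph.mem_neighborFinset G x y).1 hy⟩)
  have := congrArg ENNReal.toReal hE
  rw [ENNReal.toReal_mul, ENNReal.toReal_sum
    (fun y hy => ?hfin)] at this
  · unfold kr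
    simpa using this
  case hfin =>
    by_cases hyB : y ∈ Bf
    · exact KK_ne_top G Bf hdeg n (some_mem_CC Bf hyB) (some_mem_CC Bf ho)
    · rw [KK_outside G Bf hyB ho n]; simp


/-- recursion for the truncated Green function. -/
lemma hh_step (hdeg : ∀ x ∈ Bf, 0 < G.degree x) (ho : o ∈ Bf) (m : ℕ) {x : V} (hx : x ∈ Bf) :
    (G.degree x : ℝ) * hh G Bf o (m+1) x
      = (G.degree x : ℝ) * (if x = o then 1 else 0) + ∑ y ∈ G.neighborFinset x, hh G Bf o m y := by
  unfold hh
  rw [Finset.sum_range_succ']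
  rw [mul_add, kr_zero]
  rw [Finset.mul_sum]
  rw [Finset.sum_congr rfl (fun n _ => kr_step G Bf o hdeg ho n hx)]
  rw [Finset.sum_comm, add_comm]

/-- the discrete Laplacian of `hh (m+1)` on `Bf`. -/
lemma hh_laplace (hdeg : ∀ x ∈ Bf, 0 < G.degree x) (ho : o ∈ Bf) (m : ℕ) {x : V} (hx : x ∈ Bf) :
    (G.degree x : ℝ) * hh G Bf o (m+1) x - ∑ y ∈ G.neighborFinset x, hh G Bf o (m+1) y
      = (G.degree x : ℝ) * (if x = o then 1 else 0)
        - ∑ y ∈ G.neighborFinset x, kr G Bf o (m+1) y := by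
  have h1 := hh_step G Bf o hdeg ho m hx
  have h2 : ∀ y : V, hh G Bf o (m+1) y = hh G Bf o m y + kr G Bf o (m+1) y := by
    intro y
    unfold hh
    rw [Finset.sum_range_succ]
  rw [h1]
  rw [Finset.sum_congr rfl (fun y _ => h2 y), Finset.sum_add_distrib]
  ring

/-- swap symmetry of edge-pair sums. -/
lemma sum_E2_swap (F : V → V → ℝ) :
    ∑ p ∈ E2 G Bf, F p.1 p.2 = ∑ p ∈ E2 G Bf, F p.2 p.1 := by
  refine Finset.sum_nbij' (fun p => (p.2, p.1)) (fun p => (p.2, p.1)) ?_ ?_ ?_ ?_ ?_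
  · intro p hp
    rw [E2, Finset.mem_filter] at *
    exact ⟨Finset.mem_product.2 ⟨(Finset.mem_product.1 hp.1).2, (Finset.mem_product.1 hp.1).1⟩,
      hp.2.symm⟩
  · intro p hp
    rw [E2, Finset.mem_filter] at *
    exact ⟨Finset.mem_product.2 ⟨(Finset.mem_product.1 hp.1).2, (Finset.mem_product.1 hp.1).1⟩,
      hp.2.symm⟩
  · intro p _; rfl
  · intro p _; rfl
  · intro p _; rfl

/-- edge-pair sums as iterated sums. -/
lemma sum_E2_eq (F : V → V → ℝ) :
    ∑ p ∈ E2 G Bf, F p.1 p.2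
      = ∑ x ∈ Nf G Bf, ∑ y ∈ Nf G Bf, if G.Adj x y then F x y else 0 := by
  rw [E2, Finset.sum_filter, Finset.sum_product]

/-- summation by parts for functions supported on `Bf`. -/
lemma sbp (f g : V → ℝ) (hf : ∀ x ∉ Bf, f x = 0) (hg : ∀ x ∉ Bf, g x = 0) :
    ∑ p ∈ E2 G Bf, (f p.1 - f p.2) * (g p.1 - g p.2)
      = 2 * ∑ x ∈ Bf, f x * ((G.degree x : ℝ) * g x - ∑ y ∈ G.neighborFinset x, g y) := by
  have expand : ∑ p ∈ E2 G Bf, (f p.1 - f p.2) * (g p.1 - g p.2)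
      = 2 * ∑ p ∈ E2 G Bf, f p.1 * (g p.1 - g p.2) := by
    have h1 : ∑ p ∈ E2 G Bf, f p.2 * g p.2 = ∑ p ∈ E2 G Bf, f p.1 * g p.1 :=
      (sum_E2_swap G Bf (fun a b => f a * g a)).symm
    have h2 : ∑ p ∈ E2 G Bf, f p.2 * g p.1 = ∑ p ∈ E2 G Bf, f p.1 * g p.2 :=
      (sum_E2_swap G Bf (fun a b => f a * g b)).symm
    have e1 : ∀ p ∈ E2 G Bf, (f p.1 - f p.2) * (g p.1 - g p.2)
        = f p.1 * g p.1 - f p.1 * g p.2 - f p.2 * g p.1 + f p.2 * g p.2 := fun p _ => by ring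
    have e2 : ∀ p ∈ E2 G Bf, f p.1 * (g p.1 - g p.2)
        = f p.1 * g p.1 - f p.1 * g p.2 := fun p _ => by ring
    rw [Finset.sum_congr rfl e1, Finset.sum_congr rfl e2]
    rw [Finset.sum_add_distrib, Finset.sum_sub_distrib, Finset.sum_sub_distrib, h1, h2]
    ring
  rw [expand]
  congr 1
  rw [sum_E2_eq G Bf (fun a b => f a * (g a - g b))]
  have hrestrict : ∑ x ∈ Nf G Bf, ∑ y ∈ Nf G Bf, (if G.Adj x y then f x * (g x - g y) else 0)
      = ∑ x ∈ Bf, ∑ y ∈ Nf G Bf, (if G.Adj x y then f x * (g x - g y) else 0) := by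
    refine (Finset.sum_subset (Bf_subset_Nf G Bf) ?_).symm
    intro x _ hxBf
    refine Finset.sum_eq_zero fun y _ => ?_
    rw [hf x hxBf]
    simp
  rw [hrestrict]
  refine Finset.sum_congr rfl fun x hx => ?_
  rw [← Finset.sum_filter, Nf_filter_adj G Bf hx, ← Finset.mul_sum, Finset.sum_sub_distrib,
    Finset.sum_const, SimpleGraph.card_neighborFinset_eq_degree, nsmul_eq_mul]

/-- the inner product against the truncated Green's function. -/
lemma ip_green (hdeg : ∀ x ∈ Bf, 0 < G.degree x) (ho : o ∈ Bf) (m : ℕ)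
    (f : V → ℝ) (hf : ∀ x ∉ Bf, f x = 0) :
    ∑ p ∈ E2 G Bf, (f p.1 - f p.2) * (hh G Bf o (m+1) p.1 - hh G Bf o (m+1) p.2)
      = 2 * ((G.degree o : ℝ) * f o
          - ∑ x ∈ Bf, f x * ∑ y ∈ G.neighborFinset x, kr G Bf o (m+1) y) := by
  rw [sbp G Bf (f := f) (g := hh G Bf o (m+1)) hf (fun x hx => hh_outside G Bf o ho hx (m+1))]
  congr 1
  rw [Finset.sum_congr rfl (fun x hx => by rw [hh_laplace G Bf o hdeg ho m hx])]
  have e1 : ∀ x ∈ Bf, f x * ((G.degree x : ℝ) * (if x = o then 1 else 0)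
        - ∑ y ∈ G.neighborFinset x, kr G Bf o (m+1) y)
      = (if x = o then (G.degree x : ℝ) * f x else 0)
        - f x * ∑ y ∈ G.neighborFinset x, kr G Bf o (m+1) y := by
    intro x _
    by_cases h : x = o
    · rw [if_pos h, if_pos h]; ring
    · rw [if_neg h, if_neg h]; ring
  rw [Finset.sum_congr rfl e1, Finset.sum_sub_distrib, Finset.sum_ite_eq' Bf o
    (fun x => (G.degree x : ℝ) * f x), if_pos ho]

/-- error term bound. -/
lemma err_bound (hdeg6 : ∀ x : V, G.degree x ≤ 6) (m : ℕ)
    (f : V → ℝ) (hf1 : ∀ x, f x ≤ 1) (hf0 : ∀ x, 0 ≤ f x) :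
    ∑ x ∈ Bf, f x * ∑ y ∈ G.neighborFinset x, kr G Bf o (m+1) y
      ≤ 6 * ∑ y ∈ Nf G Bf, kr G Bf o (m+1) y := by
  have step1 : ∑ x ∈ Bf, f x * ∑ y ∈ G.neighborFinset x, kr G Bf o (m+1) y
      ≤ ∑ x ∈ Bf, ∑ y ∈ G.neighborFinset x, kr G Bf o (m+1) y := by
    refine Finset.sum_le_sum fun x _ => ?_
    have hnn : 0 ≤ ∑ y ∈ G.neighborFinset x, kr G Bf o (m+1) y :=
      Finset.sum_nonneg fun y _ => kr_nonneg G Bf o (m+1) y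
    calc f x * ∑ y ∈ G.neighborFinset x, kr G Bf o (m+1) y
        ≤ 1 * ∑ y ∈ G.neighborFinset x, kr G Bf o (m+1) y :=
          mul_le_mul_of_nonneg_right (hf1 x) hnn
      _ = _ := one_mul _
  refine le_trans step1 ?_
  have step2 : ∑ x ∈ Bf, ∑ y ∈ G.neighborFinset x, kr G Bf o (m+1) y
      = ∑ y ∈ Nf G Bf, (Bf.filter (fun x => G.Adj x y)).card * kr G Bf o (m+1) y := by
    have e1 : ∀ x ∈ Bf, ∑ y ∈ G.neighborFinset x, kr G Bf o (m+1) y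
        = ∑ y ∈ Nf G Bf, if G.Adj x y then kr G Bf o (m+1) y else 0 := by
      intro x hx
      rw [← Finset.sum_filter, Nf_filter_adj G Bf hx]
    rw [Finset.sum_congr rfl e1, Finset.sum_comm]
    refine Finset.sum_congr rfl fun y _ => ?_
    rw [← Finset.sum_filter, Finset.sum_const, nsmul_eq_mul]
  rw [step2, Finset.mul_sum]
  refine Finset.sum_le_sum fun y _ => ?_
  refine mul_le_mul_of_nonneg_right ?_ (kr_nonneg G Bf o (m+1) y)
  have hcard : (Bf.filter (fun x => G.Adj x y)).card ≤ G.degree y := by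
    rw [← SimpleGraph.card_neighborFinset_eq_degree]
    refine Finset.card_le_card ?_
    intro x hxf
    exact (SimpleGraph.mem_neighborFinset G y x).2 ((Finset.mem_filter.1 hxf).2).symm
  calc ((Bf.filter (fun x => G.Adj x y)).card : ℝ) ≤ (G.degree y : ℝ) := by exact_mod_cast hcard
    _ ≤ 6 := by exact_mod_cast hdeg6 y

/-- energy of the truncated Green's function. -/
lemma ip_green_self (hdeg : ∀ x ∈ Bf, 0 < G.degree x) (ho : o ∈ Bf) (m : ℕ) :
    ∑ p ∈ E2 G Bf, (hh G Bf o (m+1) p.1 - hh G Bf o (m+1) p.2)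
        * (hh G Bf o (m+1) p.1 - hh G Bf o (m+1) p.2)
      ≤ 2 * ((G.degree o : ℝ) * hh G Bf o (m+1) o) := by
  rw [ip_green G Bf o hdeg ho m (hh G Bf o (m+1)) (fun x hx => hh_outside G Bf o ho hx (m+1))]
  have h2 : 0 ≤ ∑ x ∈ Bf, hh G Bf o (m+1) x * ∑ y ∈ G.neighborFinset x, kr G Bf o (m+1) y := by
    refine Finset.sum_nonneg fun x _ => mul_nonneg (hh_nonneg G Bf o (m+1) x)
      (Finset.sum_nonneg fun y _ => kr_nonneg G Bf o (m+1) y)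
  nlinarith


lemma clamp_lip (a b : ℝ) : |max 0 (min 1 a) - max 0 (min 1 b)| ≤ |a - b| := by
  have hmin : |min 1 a - min 1 b| ≤ |a - b| := by
    rw [abs_sub_le_iff]
    constructor <;>
      · simp only [min_def]
        split_ifs <;>
          linarith [le_abs_self (a - b), le_abs_self (b - a), abs_sub_comm a b]
  calc |max 0 (min 1 a) - max 0 (min 1 b)|
      = |max (min 1 a) 0 - max (min 1 b) 0| := by rw [max_comm _ (0:ℝ), max_comm _ (0:ℝ)]
    _ ≤ |min 1 a - min 1 b| := abs_max_sub_max_le_abs _ _ _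
    _ ≤ |a - b| := hmin

lemma clamp_sq (a b : ℝ) :
    (max 0 (min 1 a) - max 0 (min 1 b)) * (max 0 (min 1 a) - max 0 (min 1 b))
      ≤ (a - b) * (a - b) := by
  have h := clamp_lip a b
  have h1 := abs_nonneg (max 0 (min 1 a) - max 0 (min 1 b))
  nlinarith [abs_nonneg (a-b), sq_abs (max 0 (min 1 a) - max 0 (min 1 b)), sq_abs (a-b)]

lemma energy_ge (f : V → ℝ) :
    ENNReal.ofReal (∑ p ∈ E2 G Bf, (f p.1 - f p.2) * (f p.1 - f p.2)) ≤ 2 * energy G f := by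
  unfold energy
  rw [← mul_assoc]
  have h2 : (2:ℝ≥0∞) * (1/2) = 1 := by
    rw [one_div, ENNReal.mul_inv_cancel (by norm_num) (by norm_num)]
  rw [h2, one_mul]
  rw [ENNReal.ofReal_sum_of_nonneg (fun p _ => mul_self_nonneg _)]
  have hterm : ∀ p ∈ E2 G Bf, ENNReal.ofReal ((f p.1 - f p.2) * (f p.1 - f p.2))
      = if G.Adj p.1 p.2 then ENNReal.ofReal ((f p.1 - f p.2)^2) else 0 := by
    intro p hp
    rw [if_pos (Finset.mem_filter.1 hp).2, pow_two]
  rw [Finset.sum_congr rfl hterm]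
  exact ENNReal.sum_le_tsum (E2 G Bf)

lemma energy_eq (g : V → ℝ) (hg : ∀ x ∉ Bf, g x = 0) :
    energy G g = (1/2) * ENNReal.ofReal (∑ p ∈ E2 G Bf, (g p.1 - g p.2) * (g p.1 - g p.2)) := by
  unfold energy
  congr 1
  rw [tsum_eq_sum (s := E2 G Bf) ?_]
  · rw [ENNReal.ofReal_sum_of_nonneg (fun p _ => mul_self_nonneg _)]
    refine Finset.sum_congr rfl fun p hp => ?_
    rw [if_pos (Finset.mem_filter.1 hp).2, pow_two]
  · intro p hp
    by_cases hadj : G.Adj p.1 p.2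
    · rw [if_pos hadj]
      have hout : p.1 ∉ Bf ∧ p.2 ∉ Bf := by
        constructor
        · intro h1
          refine hp ?_
          rw [E2, Finset.mem_filter]
          refine ⟨Finset.mem_product.2 ⟨Bf_subset_Nf G Bf h1, ?_⟩, hadj⟩
          exact nbr_subset_Nf G Bf h1 ((SimpleGraph.mem_neighborFinset G p.1 p.2).2 hadj)
        · intro h2
          refine hp ?_
          rw [E2, Finset.mem_filter]
          refine ⟨Finset.mem_product.2 ⟨?_, Bf_subset_Nf G Bf h2⟩, hadj⟩
          exact nbr_subset_Nf G Bf h2 ((SimpleGraph.mem_neighborFinset G p.2 p.1).2 hadj.symm)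
      rw [hg p.1 hout.1, hg p.2 hout.2]
      simp
    · rw [if_neg hadj]

lemma one_le_hh_o (ho : o ∈ Bf) (m : ℕ) : 1 ≤ hh G Bf o (m+1) o := by
  unfold hh
  have h0 : kr G Bf o 0 o = 1 := by rw [kr_zero]; simp
  calc (1:ℝ) = kr G Bf o 0 o := h0.symm
    _ ≤ ∑ n ∈ Finset.range (m+2), kr G Bf o n o :=
        Finset.single_le_sum (fun n _ => kr_nonneg G Bf o n o) (by simp)

lemma hh_o_le (hdeg : ∀ x ∈ Bf, 0 < G.degree x) (ho : o ∈ Bf)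
    (hG : ∑' n : ℕ, KK G Bf n (some o) (some o) ≠ ⊤) (m : ℕ) :
    hh G Bf o (m+1) o ≤ (∑' n : ℕ, KK G Bf n (some o) (some o)).toReal := by
  unfold hh kr
  rw [← ENNReal.toReal_sum (fun n _ => KK_ne_top G Bf hdeg n (some_mem_CC Bf ho)
    (some_mem_CC Bf ho))]
  exact ENNReal.toReal_mono hG (ENNReal.sum_le_tsum _)

lemma sigma_tendsto (hconn : G.Connected) (ho : o ∈ Bf) (r : ℕ)
    (hball : ∀ z : V, z ∈ Bf ↔ G.dist o z ≤ r)
    (hG : ∑' n : ℕ, KK G Bf n (some o) (some o) ≠ ⊤) :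
    Filter.Tendsto (fun m => ∑ y ∈ Nf G Bf, kr G Bf o m y) Filter.atTop (nhds 0) := by
  have h0 : (0:ℝ) = ∑ y ∈ Nf G Bf, (0:ℝ) := by simp
  rw [h0]
  refine tendsto_finset_sum _ fun y _ => ?_
  by_cases hyB : y ∈ Bf
  · have hfin := green_finite G Bf hconn ho r hball hyB hG
    have htend : Filter.Tendsto (fun m => KK G Bf m (some y) (some o)) Filter.atTop (nhds 0) :=
      ENNReal.tendsto_atTop_zero_of_tsum_ne_top hfin
    have hcont : Filter.Tendsto ENNReal.toReal (nhds (0:ℝ≥0∞)) (nhds (0:ℝ≥0∞).toReal) :=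
      ENNReal.tendsto_toReal (by norm_num)
    have := hcont.comp htend
    rw [ENNReal.toReal_zero] at this
    exact this
  · have : (fun m => kr G Bf o m y) = fun _ => (0:ℝ) :=
      funext fun m => kr_outside G Bf o ho hyB m
    rw [this]
    exact tendsto_const_nhds

/-- Main lower bound: any admissible function has energy at least `deg o / G`. -/
lemma energy_lower (hconn : G.Connected) (hdeg : ∀ x ∈ Bf, 0 < G.degree x)
    (hdeg6 : ∀ x : V, G.degree x ≤ 6) (ho : o ∈ Bf) (r : ℕ)
    (hball : ∀ z : V, z ∈ Bf ↔ G.dist o z ≤ r)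
    (hG : ∑' n : ℕ, KK G Bf n (some o) (some o) ≠ ⊤)
    (f : V → ℝ) (hfo : f o = 1) (hfout : ∀ x ∉ Bf, f x = 0) :
    ENNReal.ofReal ((G.degree o : ℝ) / (∑' n : ℕ, KK G Bf n (some o) (some o)).toReal)
      ≤ energy G f := by
  classical
  set Gt := (∑' n : ℕ, KK G Bf n (some o) (some o)).toReal with hGt
  set g : V → ℝ := fun x => max 0 (min 1 (f x)) with hgdef
  have hgo : g o = 1 := by rw [hgdef]; simp [hfo]
  have hgout : ∀ x ∉ Bf, g x = 0 := by
    intro x hx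
    rw [hgdef]
    simp [hfout x hx]
  have hg0 : ∀ x, 0 ≤ g x := fun x => le_max_left _ _
  have hg1 : ∀ x, g x ≤ 1 := fun x => max_le (by norm_num) (min_le_left _ _)
  -- energy of g is below energy of f
  have heg : energy G g ≤ energy G f := by
    unfold energy
    refine mul_le_mul_right (ENNReal.tsum_le_tsum fun p => ?_) _
    by_cases hadj : G.Adj p.1 p.2
    · rw [if_pos hadj, if_pos hadj]
      refine ENNReal.ofReal_le_ofReal ?_
      rw [pow_two, pow_two]
      exact clamp_sq (f p.1) (f p.2)
    · rw [if_neg hadj]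
      exact zero_le
  refine le_trans ?_ heg
  -- degree and Green positivity
  have hdo : (0:ℝ) < (G.degree o : ℝ) := by exact_mod_cast hdeg o ho
  have hGt1 : (1:ℝ) ≤ Gt := le_trans (one_le_hh_o G Bf o ho 0) (hh_o_le G Bf o hdeg ho hG 0)
  have hGtpos : (0:ℝ) < Gt := lt_of_lt_of_le one_pos hGt1
  -- the quantities
  set ipgg := ∑ p ∈ E2 G Bf, (g p.1 - g p.2) * (g p.1 - g p.2) with hipgg
  have hipgg0 : 0 ≤ ipgg := Finset.sum_nonneg fun p _ => mul_self_nonneg _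
  -- Cauchy-Schwarz step, for every m
  have hCS : ∀ m : ℕ, (∑ p ∈ E2 G Bf, (g p.1 - g p.2) * (hh G Bf o (m+1) p.1 - hh G Bf o (m+1) p.2))^2
      ≤ ipgg * (2 * (G.degree o : ℝ) * Gt) := by
    intro m
    have hcs := Finset.sum_mul_sq_le_sq_mul_sq (E2 G Bf)
      (fun p => g p.1 - g p.2) (fun p => hh G Bf o (m+1) p.1 - hh G Bf o (m+1) p.2)
    have hsq1 : ∑ p ∈ E2 G Bf, (g p.1 - g p.2)^2 = ipgg :=
      Finset.sum_congr rfl fun p _ => by rw [pow_two]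
    have hsq2 : ∑ p ∈ E2 G Bf, (hh G Bf o (m+1) p.1 - hh G Bf o (m+1) p.2)^2
        = ∑ p ∈ E2 G Bf, (hh G Bf o (m+1) p.1 - hh G Bf o (m+1) p.2)
          * (hh G Bf o (m+1) p.1 - hh G Bf o (m+1) p.2) :=
      Finset.sum_congr rfl fun p _ => by rw [pow_two]
    rw [hsq1, hsq2] at hcs
    refine le_trans hcs ?_
    have hiphh := ip_green_self G Bf o hdeg ho m
    have hhho : hh G Bf o (m+1) o ≤ Gt := hh_o_le G Bf o hdeg ho hG m
    have : ∑ p ∈ E2 G Bf, (hh G Bf o (m+1) p.1 - hh G Bf o (m+1) p.2)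
          * (hh G Bf o (m+1) p.1 - hh G Bf o (m+1) p.2)
        ≤ 2 * (G.degree o : ℝ) * Gt := by
      refine le_trans hiphh ?_
      rw [mul_assoc]
      refine mul_le_mul_of_nonneg_left ?_ (by norm_num)
      exact mul_le_mul_of_nonneg_left hhho (le_of_lt hdo)
    exact mul_le_mul_of_nonneg_left this hipgg0
  -- the linear-in-hh term tends to 2 deg o
  have hA : ∀ m : ℕ, (∑ p ∈ E2 G Bf, (g p.1 - g p.2) * (hh G Bf o (m+1) p.1 - hh G Bf o (m+1) p.2))
      = 2 * ((G.degree o : ℝ)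
        - ∑ x ∈ Bf, g x * ∑ y ∈ G.neighborFinset x, kr G Bf o (m+1) y) := by
    intro m
    rw [ip_green G Bf o hdeg ho m g hgout, hgo, mul_one]
  have herr0 : ∀ m : ℕ, 0 ≤ ∑ x ∈ Bf, g x * ∑ y ∈ G.neighborFinset x, kr G Bf o (m+1) y := by
    intro m
    exact Finset.sum_nonneg fun x _ => mul_nonneg (hg0 x)
      (Finset.sum_nonneg fun y _ => kr_nonneg G Bf o (m+1) y)
  have herr6 : ∀ m : ℕ, ∑ x ∈ Bf, g x * ∑ y ∈ G.neighborFinset x, kr G Bf o (m+1) y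
      ≤ 6 * ∑ y ∈ Nf G Bf, kr G Bf o (m+1) y :=
    fun m => err_bound G Bf o hdeg6 m g hg1 hg0
  have hsig : Filter.Tendsto (fun m => 6 * ∑ y ∈ Nf G Bf, kr G Bf o (m+1) y)
      Filter.atTop (nhds 0) := by
    have h1 := (sigma_tendsto G Bf o hconn ho r hball hG).comp
      (Filter.tendsto_add_atTop_nat 1)
    have h2 := h1.const_mul (6:ℝ)
    rw [mul_zero] at h2
    exact h2
  have herrt : Filter.Tendsto
      (fun m => ∑ x ∈ Bf, g x * ∑ y ∈ G.neighborFinset x, kr G Bf o (m+1) y)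
      Filter.atTop (nhds 0) :=
    squeeze_zero herr0 herr6 hsig
  have hAt : Filter.Tendsto
      (fun m => (∑ p ∈ E2 G Bf, (g p.1 - g p.2) * (hh G Bf o (m+1) p.1 - hh G Bf o (m+1) p.2))^2)
      Filter.atTop (nhds ((2 * (G.degree o : ℝ))^2)) := by
    have h1 : Filter.Tendsto
        (fun m => 2 * ((G.degree o : ℝ)
          - ∑ x ∈ Bf, g x * ∑ y ∈ G.neighborFinset x, kr G Bf o (m+1) y))
        Filter.atTop (nhds (2 * (G.degree o : ℝ))) := by
      have := (tendsto_const_nhds (x := (G.degree o : ℝ)) (f := Filter.atTop (α := ℕ))).sub herrt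
      rw [sub_zero] at this
      exact this.const_mul 2
    have h2 : Filter.Tendsto
        (fun m => (2 * ((G.degree o : ℝ)
          - ∑ x ∈ Bf, g x * ∑ y ∈ G.neighborFinset x, kr G Bf o (m+1) y))^2)
        Filter.atTop (nhds ((2 * (G.degree o : ℝ))^2)) := h1.pow 2
    refine h2.congr fun m => ?_
    rw [← hA m]
  -- conclude the key real inequality
  have hkey : (2 * (G.degree o : ℝ))^2 ≤ ipgg * (2 * (G.degree o : ℝ) * Gt) :=
    le_of_tendsto hAt (Filter.Eventually.of_forall hCS)
  have hipgg_ge : 2 * (G.degree o : ℝ) / Gt ≤ ipgg := by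
    rw [div_le_iff₀ hGtpos]
    nlinarith
  -- convert to energy
  have hge := energy_ge G Bf g
  rw [← hipgg] at hge
  have h1 : ENNReal.ofReal (2 * ((G.degree o : ℝ) / Gt)) ≤ ENNReal.ofReal ipgg := by
    refine ENNReal.ofReal_le_ofReal ?_
    rw [mul_div_assoc] at hipgg_ge
    exact hipgg_ge
  have h2 : ENNReal.ofReal (2 * ((G.degree o : ℝ) / Gt))
      = 2 * ENNReal.ofReal ((G.degree o : ℝ) / Gt) := by
    rw [ENNReal.ofReal_mul (by norm_num)]
    norm_num
  have hfinal : 2 * ENNReal.ofReal ((G.degree o : ℝ) / Gt) ≤ 2 * energy G g := by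
    rw [← h2]
    exact le_trans h1 hge
  have h2ne : (2:ℝ≥0∞) ≠ 0 := by norm_num
  have h2net : (2:ℝ≥0∞) ≠ ⊤ := by norm_num
  exact (ENNReal.mul_le_mul_iff_right h2ne h2net).1 hfinal

/-- Main upper bound: the normalised truncated Green's function is admissible with small
energy. -/
lemma energy_upper (hdeg : ∀ x ∈ Bf, 0 < G.degree x) (ho : o ∈ Bf) (m : ℕ) :
    energy G (fun x => hh G Bf o (m+1) x / hh G Bf o (m+1) o)
        ≤ ENNReal.ofReal ((G.degree o : ℝ) / hh G Bf o (m+1) o)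
      ∧ (fun x => hh G Bf o (m+1) x / hh G Bf o (m+1) o) o = 1
      ∧ ∀ x ∉ Bf, (fun x => hh G Bf o (m+1) x / hh G Bf o (m+1) o) x = 0 := by
  have hc1 : (1:ℝ) ≤ hh G Bf o (m+1) o := one_le_hh_o G Bf o ho m
  have hcpos : (0:ℝ) < hh G Bf o (m+1) o := lt_of_lt_of_le one_pos hc1
  have hcne : hh G Bf o (m+1) o ≠ 0 := ne_of_gt hcpos
  have hout : ∀ x ∉ Bf, (fun x => hh G Bf o (m+1) x / hh G Bf o (m+1) o) x = 0 := by
    intro x hx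
    show hh G Bf o (m+1) x / hh G Bf o (m+1) o = 0
    rw [hh_outside G Bf o ho hx (m+1), zero_div]
  refine ⟨?_, div_self hcne, hout⟩
  rw [energy_eq G Bf _ hout]
  have hip : ∑ p ∈ E2 G Bf,
      (hh G Bf o (m+1) p.1 / hh G Bf o (m+1) o - hh G Bf o (m+1) p.2 / hh G Bf o (m+1) o)
      * (hh G Bf o (m+1) p.1 / hh G Bf o (m+1) o - hh G Bf o (m+1) p.2 / hh G Bf o (m+1) o)
      ≤ 2 * (G.degree o : ℝ) / hh G Bf o (m+1) o := by
    have e1 : ∀ p ∈ E2 G Bf,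
        (hh G Bf o (m+1) p.1 / hh G Bf o (m+1) o - hh G Bf o (m+1) p.2 / hh G Bf o (m+1) o)
        * (hh G Bf o (m+1) p.1 / hh G Bf o (m+1) o - hh G Bf o (m+1) p.2 / hh G Bf o (m+1) o)
        = ((hh G Bf o (m+1) p.1 - hh G Bf o (m+1) p.2) * (hh G Bf o (m+1) p.1 - hh G Bf o (m+1) p.2))
          / (hh G Bf o (m+1) o * hh G Bf o (m+1) o) := by
      intro p _
      rw [div_sub_div_same, div_mul_div_comm]
    rw [Finset.sum_congr rfl e1, ← Finset.sum_div]
    rw [div_le_div_iff₀ (by positivity) hcpos]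
    calc (∑ p ∈ E2 G Bf, (hh G Bf o (m+1) p.1 - hh G Bf o (m+1) p.2)
          * (hh G Bf o (m+1) p.1 - hh G Bf o (m+1) p.2)) * hh G Bf o (m+1) o
        ≤ (2 * ((G.degree o : ℝ) * hh G Bf o (m+1) o)) * hh G Bf o (m+1) o := by
          refine mul_le_mul_of_nonneg_right (ip_green_self G Bf o hdeg ho m) (le_of_lt hcpos)
      _ = 2 * (G.degree o : ℝ) * (hh G Bf o (m+1) o * hh G Bf o (m+1) o) := by ring
  calc (1/2 : ℝ≥0∞) * ENNReal.ofReal (∑ p ∈ E2 G Bf,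
        (hh G Bf o (m+1) p.1 / hh G Bf o (m+1) o - hh G Bf o (m+1) p.2 / hh G Bf o (m+1) o)
        * (hh G Bf o (m+1) p.1 / hh G Bf o (m+1) o - hh G Bf o (m+1) p.2 / hh G Bf o (m+1) o))
      ≤ (1/2 : ℝ≥0∞) * ENNReal.ofReal (2 * (G.degree o : ℝ) / hh G Bf o (m+1) o) :=
        mul_le_mul_right (ENNReal.ofReal_le_ofReal hip) _
    _ = ENNReal.ofReal ((G.degree o : ℝ) / hh G Bf o (m+1) o) := by
        rw [mul_div_assoc, ENNReal.ofReal_mul (by norm_num), ← mul_assoc]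
        rw [show ((1:ℝ≥0∞)/2) * ENNReal.ofReal 2 = 1 by
          rw [ENNReal.ofReal_ofNat, one_div, ENNReal.inv_mul_cancel (by norm_num) (by norm_num)]]
        rw [one_mul]

end RealSide

section Final
variable {o : V}

lemma GE_eq (hdeg : ∀ x ∈ Bf, 0 < G.degree x) (ho : o ∈ Bf) (m : ℕ) :
    ∑ n ∈ Finset.range (m+2), KK G Bf n (some o) (some o)
      = ENNReal.ofReal (hh G Bf o (m+1) o) := by
  unfold hh kr
  rw [ENNReal.ofReal_sum_of_nonneg (fun n _ => ENNReal.toReal_nonneg)]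
  exact Finset.sum_congr rfl fun n _ =>
    (ENNReal.ofReal_toReal (KK_ne_top G Bf hdeg n (some_mem_CC Bf ho) (some_mem_CC Bf ho))).symm

lemma Ge_le_GG :
    ∑' n : ℕ, KK G Bf (n + n) (some o) (some o) ≤ ∑' n : ℕ, KK G Bf n (some o) (some o) :=
  tsum_comp_le_tsum_of_injective (f := fun n : ℕ => n + n)
    (fun a b h => by have h' : a + a = b + b := h; omega)
    (fun k => KK G Bf k (some o) (some o))

lemma GG_le_two_Ge (hdeg : ∀ x ∈ Bf, 0 < G.degree x) (ho : o ∈ Bf) :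
    ∑' n : ℕ, KK G Bf n (some o) (some o)
      ≤ 2 * ∑' n : ℕ, KK G Bf (n + n) (some o) (some o) := by
  set Ge := ∑' n : ℕ, KK G Bf (n + n) (some o) (some o) with hGe
  have heven : ∑' n : ℕ, KK G Bf (2 * n) (some o) (some o) = Ge :=
    tsum_congr fun n => by rw [two_mul]
  have hshift : ∑' n : ℕ, KK G Bf ((n+1) + (n+1)) (some o) (some o) ≤ Ge :=
    tsum_comp_le_tsum_of_injective (f := fun n : ℕ => n + 1)
      (fun a b h => by have h' : a + 1 = b + 1 := h; omega)
      (fun k => KK G Bf (k + k) (some o) (some o))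
  have hodd : ∑' n : ℕ, KK G Bf (2 * n + 1) (some o) (some o) ≤ Ge := by
    have h2 : 2 * ∑' n : ℕ, KK G Bf (2 * n + 1) (some o) (some o)
        ≤ 2 * Ge := by
      rw [← ENNReal.tsum_mul_left]
      have hstep : ∀ n : ℕ, 2 * KK G Bf (2 * n + 1) (some o) (some o)
          ≤ KK G Bf (n + n) (some o) (some o) + KK G Bf ((n+1) + (n+1)) (some o) (some o) := by
        intro n
        have : 2 * n + 1 = n + (n + 1) := by omega
        rw [this]
        exact KK_odd_le G Bf hdeg n ho
      refine le_trans (ENNReal.tsum_le_tsum hstep) ?_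
      rw [ENNReal.tsum_add, two_mul]
      exact add_le_add le_rfl hshift
    exact (ENNReal.mul_le_mul_iff_right (by norm_num) (by norm_num)).1 h2
  calc ∑' n : ℕ, KK G Bf n (some o) (some o)
      = (∑' n : ℕ, KK G Bf (2 * n) (some o) (some o))
        + ∑' n : ℕ, KK G Bf (2 * n + 1) (some o) (some o) :=
        (tsum_even_add_odd ENNReal.summable ENNReal.summable).symm
    _ ≤ Ge + Ge := by rw [heven]; exact add_le_add le_rfl hodd
    _ = 2 * Ge := (two_mul Ge).symm

lemma EZ_ge (hdeg : ∀ x ∈ Bf, 0 < G.degree x) (ho : o ∈ Bf) :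
    (∑' n : ℕ, KK G Bf (n + n) (some o) (some o)) * ((G.degree o : ℝ≥0∞))⁻¹
      ≤ ∑' n : ℕ, ∑ x ∈ Bf, (KK G Bf n (some o) (some x))^2 := by
  rw [← ENNReal.tsum_mul_right]
  exact ENNReal.tsum_le_tsum fun n => sum_sq_ge G Bf hdeg n ho

lemma EZ_le (hdeg : ∀ x ∈ Bf, 0 < G.degree x) (hdeg6 : ∀ x : V, G.degree x ≤ 6) (ho : o ∈ Bf) :
    ∑' n : ℕ, ∑ x ∈ Bf, (KK G Bf n (some o) (some x))^2
      ≤ 6 * (∑' n : ℕ, KK G Bf (n + n) (some o) (some o)) * ((G.degree o : ℝ≥0∞))⁻¹ := by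
  refine le_trans (ENNReal.tsum_le_tsum fun n => sum_sq_le G Bf hdeg hdeg6 n ho) ?_
  have hterm : ∀ n : ℕ, 6 * KK G Bf (n + n) (some o) (some o) * ((G.degree o : ℝ≥0∞))⁻¹
      = 6 * (KK G Bf (n + n) (some o) (some o) * ((G.degree o : ℝ≥0∞))⁻¹) := fun n => by ring
  rw [tsum_congr hterm, ENNReal.tsum_mul_left, ENNReal.tsum_mul_right, mul_assoc]

end Final
end FMB

/-- If every vertex of `G` has degree at most `6` and
`2εr ≤ R_eff(0, V∖B_r) ≤ r`, then the expected number of collisions of two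
independent simple random walks on `G` killed upon exiting the graph-metric
ball `B_r`, both started at `0`, satisfies `εr ≤ E₀₀(Z_{B_r}) ≤ 6r`. -/
theorem first_moment_bounds
    (G : SimpleGraph V) [G.LocallyFinite] (hconn : G.Connected) (hinf : Infinite V)
    (o : V) (hdeg : ∀ x : V, G.degree x ≤ 6)
    (r : ℕ) (hr : 1 ≤ r) (ε : ℝ) (hε : 0 < ε)
    (Br : Set V) (hBr : Br = {x : V | G.dist o x ≤ r})
    (hlow : ENNReal.ofReal (2 * ε * r) ≤ effRes G {o} Brᶜ)
    (hup : effRes G {o} Brᶜ ≤ (r : ℝ≥0∞))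
    (ν : Measure (ℕ → Option V × Option V)) (hν : IsKilledPairLaw G Br o o ν) :
    ENNReal.ofReal (ε * r) ≤ ∫⁻ ω, collisions Br ω ∂ν ∧
      ∫⁻ ω, collisions Br ω ∂ν ≤ 6 * r := by
  classical
  -- the ball as a finset
  have hfin : {x : V | G.dist o x ≤ r}.Finite := FMB.ball_finite G hconn o r
  set Bf : Finset V := hfin.toFinset with hBfdef
  have hball : ∀ z : V, z ∈ Bf ↔ G.dist o z ≤ r := by
    intro z
    rw [hBfdef, Set.Finite.mem_toFinset, Set.mem_setOf_eq]
  have hBrBf : Br = ↑Bf := by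
    rw [hBr, hBfdef, Set.Finite.coe_toFinset]
  have ho : o ∈ Bf := (hball o).2 (by rw [SimpleGraph.dist_self]; omega)
  have hdeg1 : ∀ x : V, 0 < G.degree x := FMB.degree_pos G hconn hinf
  have hdegB : ∀ x ∈ Bf, 0 < G.degree x := fun x _ => hdeg1 x
  rw [hBrBf] at hlow hup hν ⊢
  -- notation
  set dO : ℝ≥0∞ := (G.degree o : ℝ≥0∞) with hdO
  have hdOne : dO ≠ 0 := by
    rw [hdO]
    exact_mod_cast (hdeg1 o).ne'
  have hdOnetop : dO ≠ ⊤ := by rw [hdO]; simp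
  have hdoR : (0:ℝ) < (G.degree o : ℝ) := by exact_mod_cast hdeg1 o
  -- the lintegral identity
  have hEZ : ∫⁻ ω, collisions (↑Bf) ω ∂ν
      = ∑' n : ℕ, ∑ x ∈ Bf, (FMB.KK G Bf n (some o) (some x))^2 :=
    FMB.lint_collisions G Bf ν hdegB ho hν
  set GG := ∑' n : ℕ, FMB.KK G Bf n (some o) (some o) with hGG
  set Ge := ∑' n : ℕ, FMB.KK G Bf (n + n) (some o) (some o) with hGe
  -- the infimum of energies
  set IE := ⨅ f ∈ {f : V → ℝ | energy G f ≠ ⊤ ∧ (∀ x ∈ ({o} : Set V), f x = 1)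
      ∧ ∀ x ∈ (↑Bf : Set V)ᶜ, f x = 0}, energy G f with hIE
  have heffRes : effRes G {o} (↑Bf)ᶜ = IE⁻¹ := rfl
  -- upper bounds on IE from the truncated Green's functions
  have hIEle : ∀ m : ℕ, IE ≤ ENNReal.ofReal ((G.degree o : ℝ) / FMB.hh G Bf o (m+1) o) := by
    intro m
    obtain ⟨hen, hone, hzero⟩ := FMB.energy_upper G Bf o hdegB ho m
    refine le_trans (iInf₂_le (fun x => FMB.hh G Bf o (m+1) x / FMB.hh G Bf o (m+1) o) ?_) hen
    refine ⟨?_, ?_, ?_⟩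
    · exact ne_top_of_le_ne_top ENNReal.ofReal_ne_top hen
    · intro x hx
      rw [Set.mem_singleton_iff] at hx
      rw [hx]
      exact hone
    · intro x hx
      exact hzero x (by simpa using hx)
  -- `r⁻¹ ≤ IE` from the resistance upper bound
  have hIEinv : ((r:ℝ≥0∞))⁻¹ ≤ IE := by
    rw [heffRes] at hup
    have := ENNReal.inv_le_inv.2 hup
    rwa [inv_inv] at this
  have hrR : (0:ℝ) < (r:ℝ) := by exact_mod_cast hr
  -- hh o is bounded: hh (m+1) o ≤ r * deg o
  have hhh_le : ∀ m : ℕ, FMB.hh G Bf o (m+1) o ≤ (r:ℝ) * (G.degree o : ℝ) := by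
    intro m
    have h1 := le_trans hIEinv (hIEle m)
    have hc1 : (1:ℝ) ≤ FMB.hh G Bf o (m+1) o := FMB.one_le_hh_o G Bf o ho m
    have hcpos : (0:ℝ) < FMB.hh G Bf o (m+1) o := lt_of_lt_of_le one_pos hc1
    rw [show ((r:ℝ≥0∞)) = ENNReal.ofReal ((r:ℝ)) from (ENNReal.ofReal_natCast r).symm,
      ← ENNReal.ofReal_inv_of_pos hrR] at h1
    have h2 : ((r:ℝ))⁻¹ ≤ (G.degree o : ℝ) / FMB.hh G Bf o (m+1) o :=
      (ENNReal.ofReal_le_ofReal_iff (by positivity)).1 h1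
    rw [inv_eq_one_div, div_le_div_iff₀ hrR hcpos, one_mul] at h2
    linarith [h2]
  -- GG is finite
  have hGGle : GG ≤ ENNReal.ofReal ((r:ℝ) * (G.degree o : ℝ)) := by
    rw [hGG]
    refine le_of_tendsto (ENNReal.tendsto_nat_tsum _) (Filter.Eventually.of_forall fun k => ?_)
    have hsub : Finset.range k ⊆ Finset.range (k+2) := Finset.range_subset_range.2 (by omega)
    refine le_trans (Finset.sum_le_sum_of_subset hsub) ?_
    rw [FMB.GE_eq G Bf hdegB ho k]
    exact ENNReal.ofReal_le_ofReal (hhh_le k)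
  have hGGtop : GG ≠ ⊤ := ne_top_of_le_ne_top ENNReal.ofReal_ne_top hGGle
  set Gt : ℝ := GG.toReal with hGt
  have hGt1 : (1:ℝ) ≤ Gt := by
    have h1 : (1:ℝ≥0∞) ≤ GG := by
      rw [hGG]
      have := ENNReal.le_tsum (f := fun n => FMB.KK G Bf n (some o) (some o)) 0
      rwa [FMB.KK_zero, if_pos rfl] at this
    calc (1:ℝ) = (1:ℝ≥0∞).toReal := by simp
      _ ≤ Gt := ENNReal.toReal_mono hGGtop h1
  have hGtpos : (0:ℝ) < Gt := lt_of_lt_of_le one_pos hGt1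
  -- IE is bounded below: every admissible f has energy ≥ deg o / Gt
  have hIEge : ENNReal.ofReal ((G.degree o : ℝ) / Gt) ≤ IE := by
    refine le_iInf₂ fun f hf => ?_
    obtain ⟨hen, hone, hzero⟩ := hf
    exact FMB.energy_lower G Bf o hconn hdegB hdeg ho r hball hGGtop f
      (hone o rfl) (fun x hx => hzero x (by simpa using hx))
  -- IE ≤ deg o / Gt (limit of the upper bounds)
  have hIEle' : IE ≤ ENNReal.ofReal ((G.degree o : ℝ) / Gt) := by
    -- hh (m+1) o tends to Gt
    have htendGE : Filter.Tendsto (fun m : ℕ => FMB.hh G Bf o (m+1) o)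
        Filter.atTop (nhds Gt) := by
      have h1 : Filter.Tendsto (fun k : ℕ => ∑ n ∈ Finset.range k,
          FMB.KK G Bf n (some o) (some o)) Filter.atTop (nhds GG) :=
        ENNReal.tendsto_nat_tsum _
      have h2 := h1.comp (Filter.tendsto_add_atTop_nat 2)
      have h3 := (ENNReal.tendsto_toReal hGGtop).comp h2
      refine h3.congr fun m => ?_
      show ((∑ n ∈ Finset.range (m+2), FMB.KK G Bf n (some o) (some o))).toReal = _
      rw [FMB.GE_eq G Bf hdegB ho m, ENNReal.toReal_ofReal]
      have hc1 : (1:ℝ) ≤ FMB.hh G Bf o (m+1) o := FMB.one_le_hh_o G Bf o ho m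
      linarith
    have htendq : Filter.Tendsto
        (fun m : ℕ => ENNReal.ofReal ((G.degree o : ℝ) / FMB.hh G Bf o (m+1) o))
        Filter.atTop (nhds (ENNReal.ofReal ((G.degree o : ℝ) / Gt))) := by
      have hdiv : Filter.Tendsto (fun m : ℕ => (G.degree o : ℝ) / FMB.hh G Bf o (m+1) o)
          Filter.atTop (nhds ((G.degree o : ℝ) / Gt)) :=
        (tendsto_const_nhds).div htendGE (ne_of_gt hGtpos)
      exact (ENNReal.continuous_ofReal.tendsto _).comp hdiv
    exact ge_of_tendsto htendq (Filter.Eventually.of_forall hIEle)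
  -- resistance sandwich
  have hres_le : IE⁻¹ ≤ ENNReal.ofReal (Gt / (G.degree o : ℝ)) := by
    have h1 := ENNReal.inv_le_inv.2 hIEge
    rwa [← ENNReal.ofReal_inv_of_pos (by positivity), inv_div] at h1
  have hres_ge : ENNReal.ofReal (Gt / (G.degree o : ℝ)) ≤ IE⁻¹ := by
    have h1 := ENNReal.inv_le_inv.2 hIEle'
    rwa [← ENNReal.ofReal_inv_of_pos (by positivity), inv_div] at h1
  -- GG as ofReal Gt
  have hGGof : GG = ENNReal.ofReal Gt := (ENNReal.ofReal_toReal hGGtop).symm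
  constructor
  · -- lower bound
    rw [heffRes] at hlow
    have h2er : 2 * ε * (r:ℝ) ≤ Gt / (G.degree o : ℝ) := by
      have := le_trans hlow hres_le
      exact (ENNReal.ofReal_le_ofReal_iff (by positivity)).1 this
    have hGt2er : 2 * (ε * (r:ℝ)) * (G.degree o : ℝ) ≤ Gt := by
      rw [le_div_iff₀ hdoR] at h2er
      calc 2 * (ε * (r:ℝ)) * (G.degree o : ℝ) = 2 * ε * (r:ℝ) * (G.degree o : ℝ) := by ring
        _ ≤ Gt := h2er
    rw [hEZ]
    refine le_trans ?_ (FMB.EZ_ge G Bf hdegB ho)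
    have hGe2 : GG * 2⁻¹ ≤ Ge := by
      have h := FMB.GG_le_two_Ge G Bf hdegB ho
      have h2 := mul_le_mul_left h (2⁻¹ : ℝ≥0∞)
      rwa [mul_comm (2:ℝ≥0∞) (Ge : ℝ≥0∞), mul_assoc,
        ENNReal.mul_inv_cancel (by norm_num) (by norm_num), mul_one] at h2
    refine le_trans ?_ (mul_le_mul_left hGe2 dO⁻¹)
    rw [hGGof]
    have hofeq : ENNReal.ofReal (2*(ε*(r:ℝ))*(G.degree o:ℝ))
        = 2 * ENNReal.ofReal (ε*(r:ℝ)) * dO := by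
      rw [ENNReal.ofReal_mul (by positivity), ENNReal.ofReal_mul (by norm_num),
        ENNReal.ofReal_ofNat, ENNReal.ofReal_natCast]
    have hX : 2 * ENNReal.ofReal (ε*(r:ℝ)) * dO ≤ ENNReal.ofReal Gt := by
      rw [← hofeq]
      exact ENNReal.ofReal_le_ofReal hGt2er
    have hcanc : (2:ℝ≥0∞) * ENNReal.ofReal (ε*(r:ℝ)) * dO * 2⁻¹ * dO⁻¹
        = ENNReal.ofReal (ε*(r:ℝ)) := by
      rw [show (2:ℝ≥0∞) * ENNReal.ofReal (ε*(r:ℝ)) * dO * 2⁻¹ * dO⁻¹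
          = ENNReal.ofReal (ε*(r:ℝ)) * (2 * 2⁻¹) * (dO * dO⁻¹) by ring]
      rw [ENNReal.mul_inv_cancel (by norm_num) (by norm_num),
        ENNReal.mul_inv_cancel hdOne hdOnetop, mul_one, mul_one]
    calc ENNReal.ofReal (ε*(r:ℝ))
        = 2 * ENNReal.ofReal (ε*(r:ℝ)) * dO * 2⁻¹ * dO⁻¹ := hcanc.symm
      _ ≤ ENNReal.ofReal Gt * 2⁻¹ * dO⁻¹ := mul_le_mul_left (mul_le_mul_left hX _) _
  · -- upper bound
    rw [hEZ]
    refine le_trans (FMB.EZ_le G Bf hdegB hdeg ho) ?_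
    have hGeGG : Ge ≤ GG := FMB.Ge_le_GG G Bf
    have hGGr : GG ≤ (r:ℝ≥0∞) * dO := by
      rw [ENNReal.ofReal_mul (by positivity), ENNReal.ofReal_natCast,
        ENNReal.ofReal_natCast] at hGGle
      exact hGGle
    calc 6 * Ge * dO⁻¹ ≤ 6 * ((r:ℝ≥0∞) * dO) * dO⁻¹ := by
          gcongr
          exact le_trans hGeGG hGGr
      _ = 6 * (r:ℝ≥0∞) * (dO * dO⁻¹) := by ring
      _ = 6 * (r:ℝ≥0∞) := by rw [ENNReal.mul_inv_cancel hdOne hdOnetop, mul_one]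
      _ = 6 * (r:ℝ≥0∞) := rfl

end
end

section
/- The expected number of collisions of two independent simple random walks on G killed upon exiting B, both started at 0, satisfies the lower bound E_{0,0}(Z_B) ≥ (1/2) R_eff(0, V∖B). -/
open MeasureTheory ENNReal
open scoped Classical

noncomputable section

variable {V : Type*}

namespace FMRLB

variable (G : SimpleGraph V) [G.LocallyFinite] (B : Set V) (o : V) (hB : B.Finite)

/-- `pk n x` : probability the killed walk started at `o` is at `x` at time `n`. -/
def pk : ℕ → V → ℝ≥0∞
  | 0, x => if x = o then 1 else 0
  | (n+1), x => ∑ y ∈ hB.toFinset, pk n y * killedStep G B (some y) (some x)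

lemma pk_zero (x : V) : pk G B o hB 0 x = if x = o then 1 else 0 := rfl

lemma pk_succ (n : ℕ) (x : V) :
    pk G B o hB (n+1) x = ∑ y ∈ hB.toFinset, pk G B o hB n y * killedStep G B (some y) (some x) :=
  rfl

lemma killedStep_some_some (x y : V) :
    killedStep G B (some x) (some y) =
      if x ∈ B ∧ G.Adj x y ∧ y ∈ B then ((G.degree x : ℝ≥0∞))⁻¹ else 0 := rfl

lemma killedStep_some_ne_top (x y : V) : killedStep G B (some x) (some y) ≠ ⊤ := by
  rw [killedStep_some_some]
  split
  · next h =>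
    have hd : 0 < G.degree x := by
      rw [SimpleGraph.degree_pos_iff_exists_adj]; exact ⟨y, h.2.1⟩
    simp only [ne_eq, ENNReal.inv_eq_top, Nat.cast_eq_zero]
    omega
  · simp

lemma killedStep_row_sum_le (y : V) :
    ∑ x ∈ hB.toFinset, killedStep G B (some y) (some x) ≤ 1 := by
  simp only [killedStep_some_some]
  have h1 : ∑ x ∈ hB.toFinset, (if y ∈ B ∧ G.Adj y x ∧ x ∈ B then ((G.degree y : ℝ≥0∞))⁻¹ else 0)
      ≤ ∑ x ∈ hB.toFinset.filter (fun x => G.Adj y x), ((G.degree y : ℝ≥0∞))⁻¹ := by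
    rw [Finset.sum_filter]
    apply Finset.sum_le_sum
    intro x hx
    split <;> split <;> simp_all
  refine h1.trans ?_
  rw [Finset.sum_const, nsmul_eq_mul]
  have hcard : (hB.toFinset.filter (fun x => G.Adj y x)).card ≤ G.degree y := by
    rw [← SimpleGraph.card_neighborFinset_eq_degree]
    apply Finset.card_le_card
    intro x hx
    simp only [Finset.mem_filter] at hx
    simp [SimpleGraph.mem_neighborFinset, hx.2]
  calc ((hB.toFinset.filter (fun x => G.Adj y x)).card : ℝ≥0∞) * (G.degree y : ℝ≥0∞)⁻¹
      ≤ (G.degree y : ℝ≥0∞) * (G.degree y : ℝ≥0∞)⁻¹ :=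
        mul_le_mul_left (by exact_mod_cast hcard) _
    _ ≤ 1 := ENNReal.mul_inv_le_one _

lemma pk_not_mem (hoB : o ∈ B) (n : ℕ) (x : V) (hx : x ∉ B) : pk G B o hB n x = 0 := by
  cases n with
  | zero =>
    rw [pk_zero, if_neg]
    rintro rfl; exact hx hoB
  | succ n =>
    rw [pk_succ]
    apply Finset.sum_eq_zero
    intro y _
    rw [killedStep_some_some, if_neg, mul_zero]
    rintro ⟨-, -, h⟩; exact hx h

lemma pk_sum_le_one (n : ℕ) : ∑ x ∈ hB.toFinset, pk G B o hB n x ≤ 1 := by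
  induction n with
  | zero =>
    simp only [pk_zero]
    rw [Finset.sum_ite_eq' hB.toFinset o (fun _ => (1:ℝ≥0∞))]
    split <;> simp
  | succ n ih =>
    simp only [pk_succ]
    rw [Finset.sum_comm]
    calc ∑ y ∈ hB.toFinset, ∑ x ∈ hB.toFinset, pk G B o hB n y * killedStep G B (some y) (some x)
        = ∑ y ∈ hB.toFinset, pk G B o hB n y * ∑ x ∈ hB.toFinset, killedStep G B (some y) (some x) := by
          simp [Finset.mul_sum]
      _ ≤ ∑ y ∈ hB.toFinset, pk G B o hB n y * 1 := by
          apply Finset.sum_le_sum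
          intro y _
          exact mul_le_mul_right (killedStep_row_sum_le G B hB y) _
      _ ≤ 1 := by simpa using ih

lemma pk_le_one (hoB : o ∈ B) (n : ℕ) (x : V) : pk G B o hB n x ≤ 1 := by
  by_cases hx : x ∈ B
  · refine le_trans ?_ (pk_sum_le_one G B o hB n)
    exact Finset.single_le_sum (fun _ _ => zero_le) (hB.mem_toFinset.mpr hx)
  · rw [pk_not_mem G B o hB hoB n x hx]; exact zero_le_one

lemma pk_ne_top (hoB : o ∈ B) (n : ℕ) (x : V) : pk G B o hB n x ≠ ⊤ :=
  ne_top_of_le_ne_top one_ne_top (pk_le_one G B o hB hoB n x)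

/-- allowed states -/
def Sfin : Finset (Option V) := insert none (hB.toFinset.image some)

/-- paths of length n staying in `Sfin`, ending at `some x` -/
def Pf (n : ℕ) (x : V) : Finset (Fin (n+1) → Option V) :=
  (Fintype.piFinset (fun _ : Fin (n+1) => Sfin B hB)).filter (fun w => w (Fin.last n) = some x)

lemma pathsum (hoB : o ∈ B) (n : ℕ) (x : V) (hx : x ∈ B) :
    ∑ w ∈ Pf B hB n x, killedCylProb G B o w = pk G B o hB n x := by
  induction n generalizing x with
  | zero =>
    have hset : Pf B hB 0 x = {fun _ => some x} := by
      ext w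
      simp only [Pf, Finset.mem_filter, Fintype.mem_piFinset, Finset.mem_singleton]
      constructor
      · rintro ⟨-, h⟩
        funext i
        have hi : i = Fin.last 0 := by
          apply Fin.ext
          have := i.isLt
          simp [Fin.last]
        rw [hi, h]
      · rintro rfl
        refine ⟨fun i => ?_, rfl⟩
        simp [Sfin, Set.Finite.mem_toFinset, hx]
    rw [hset, Finset.sum_singleton, pk_zero]
    simp only [killedCylProb, Finset.univ_eq_empty, Finset.prod_empty, mul_one]
    by_cases h : x = o <;> simp [h]
  | succ n ih =>
    rw [pk_succ]
    have hsum : ∑ w ∈ Pf B hB (n+1) x, killedCylProb G B o w =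
        ∑ u ∈ Fintype.piFinset (fun _ : Fin (n+1) => Sfin B hB),
          killedCylProb G B o u * killedStep G B (u (Fin.last n)) (some x) := by
      apply Finset.sum_nbij' (i := fun w => w ∘ Fin.castSucc)
        (j := fun u => Fin.snoc u (some x))
      · intro w hw
        simp only [Pf, Finset.mem_filter, Fintype.mem_piFinset] at hw
        rw [Fintype.mem_piFinset]
        intro i
        exact hw.1 _
      · intro u hu
        rw [Fintype.mem_piFinset] at hu
        simp only [Pf, Finset.mem_filter, Fintype.mem_piFinset]
        constructor
        · intro i
          cases i using Fin.lastCases with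
          | last => simp [Sfin, Set.Finite.mem_toFinset, hx]
          | cast i => rw [Fin.snoc_castSucc]; exact hu i
        · rw [Fin.snoc_last]
      · intro w hw
        simp only [Pf, Finset.mem_filter] at hw
        funext i
        cases i using Fin.lastCases with
        | last => rw [Fin.snoc_last, hw.2]
        | cast i => rw [Fin.snoc_castSucc]; rfl
      · intro u hu
        funext i
        exact Fin.snoc_castSucc _ _ _
      · intro w hw
        simp only [Pf, Finset.mem_filter] at hw
        simp only [killedCylProb, Function.comp_apply]
        rw [Fin.prod_univ_castSucc, Fin.succ_last, hw.2, ← mul_assoc]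
        simp only [Fin.castSucc_zero, Fin.succ_castSucc]
        rfl
    rw [hsum,
      ← Finset.sum_fiberwise_of_maps_to (g := fun u => u (Fin.last n)) (t := Sfin B hB)
        (fun u hu => by rw [Fintype.mem_piFinset] at hu; exact hu _)]
    have hinner : ∀ b ∈ Sfin B hB,
        ∑ u ∈ (Fintype.piFinset (fun _ : Fin (n+1) => Sfin B hB)).filter
            (fun u => u (Fin.last n) = b),
          killedCylProb G B o u * killedStep G B (u (Fin.last n)) (some x)
        = (∑ u ∈ (Fintype.piFinset (fun _ : Fin (n+1) => Sfin B hB)).filter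
            (fun u => u (Fin.last n) = b), killedCylProb G B o u) * killedStep G B b (some x) := by
      intro b _
      rw [Finset.sum_mul]
      apply Finset.sum_congr rfl
      intro u hu
      rw [(Finset.mem_filter.mp hu).2]
    rw [Finset.sum_congr rfl hinner]
    rw [Sfin, Finset.sum_insert (by simp)]
    have hnone : killedStep G B none (some x) = 0 := rfl
    rw [hnone, mul_zero, zero_add]
    rw [Finset.sum_image (fun y _ z _ h => Option.some_injective V h)]
    apply Finset.sum_congr rfl
    intro y hy
    congr 1
    exact ih y (hB.mem_toFinset.mp hy)

lemma meas_singleton_pair (p : Option V × Option V) :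
    MeasurableSet ({p} : Set (Option V × Option V)) := by
  have h : ({p} : Set (Option V × Option V)) = {p.1} ×ˢ {p.2} := by
    ext q
    simp [Prod.ext_iff, Set.mem_prod]
  rw [h]
  exact MeasurableSet.prod MeasurableSpace.measurableSet_top MeasurableSpace.measurableSet_top

lemma measurable_cyl_pair (n : ℕ) (W : Fin (n+1) → Option V × Option V) :
    MeasurableSet {ω : ℕ → Option V × Option V | ∀ i : Fin (n+1), ω i = W i} := by
  have h : {ω : ℕ → Option V × Option V | ∀ i : Fin (n+1), ω i = W i}
      = ⋂ i : Fin (n+1), (fun ω : ℕ → Option V × Option V => ω (i : ℕ)) ⁻¹' {W i} := by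
    ext ω; simp [Set.mem_iInter]
  rw [h]
  exact MeasurableSet.iInter fun i => (measurable_pi_apply _) (meas_singleton_pair _)

lemma meas_eventAt (n : ℕ) (c : Option V × Option V) :
    MeasurableSet {ω : ℕ → Option V × Option V | ω n = c} := by
  have h : {ω : ℕ → Option V × Option V | ω n = c}
      = (fun ω : ℕ → Option V × Option V => ω n) ⁻¹' {c} := rfl
  rw [h]
  exact (measurable_pi_apply n) (meas_singleton_pair c)

lemma sq_le_meas (ν : Measure (ℕ → Option V × Option V)) (hν : IsKilledPairLaw G B o o ν)
    (hoB : o ∈ B) (n : ℕ) (x : V) (hx : x ∈ B) :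
    pk G B o hB n x ^ 2 ≤ ν {ω | ω n = (some x, some x)} := by
  classical
  set P := Pf B hB n x with hP
  set E : (Fin (n+1) → Option V) × (Fin (n+1) → Option V) → Set (ℕ → Option V × Option V) :=
    fun pr => {ω | ∀ i : Fin (n+1), ω i = (pr.1 i, pr.2 i)} with hE
  have hmeas : ∀ pr, MeasurableSet (E pr) := fun pr => measurable_cyl_pair n _
  have hlastP : ∀ w ∈ P, w (Fin.last n) = some x := by
    intro w hw
    exact (Finset.mem_filter.mp hw).2
  have hdisj : Set.PairwiseDisjoint ((P ×ˢ P : Finset _) : Set _) E := by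
    intro p hp q hq hne
    rw [Function.onFun, Set.disjoint_left]
    intro ω hωp hωq
    apply hne
    have h1 : p.1 = q.1 := by
      funext i
      have := (hωp i).symm.trans (hωq i)
      exact (Prod.mk.injEq _ _ _ _).mp this |>.1
    have h2 : p.2 = q.2 := by
      funext i
      have := (hωp i).symm.trans (hωq i)
      exact (Prod.mk.injEq _ _ _ _).mp this |>.2
    exact Prod.ext h1 h2
  have hsub : ∀ pr ∈ P ×ˢ P, E pr ⊆ {ω | ω n = (some x, some x)} := by
    intro pr hpr ω hω
    have h1 := hω (Fin.last n)
    rw [Fin.val_last] at h1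
    rw [Finset.mem_product] at hpr
    show ω n = (some x, some x)
    rw [h1, hlastP _ hpr.1, hlastP _ hpr.2]
  have hsum : ∑ pr ∈ P ×ˢ P, ν (E pr) = pk G B o hB n x ^ 2 := by
    have hν2 : ∀ pr : (Fin (n+1) → Option V) × (Fin (n+1) → Option V),
        ν (E pr) = killedCylProb G B o pr.1 * killedCylProb G B o pr.2 := by
      intro pr
      exact hν.2 n (fun i => (pr.1 i, pr.2 i))
    simp only [hν2]
    rw [Finset.sum_product]
    rw [← Finset.sum_mul_sum]
    rw [pathsum G B o hB hoB n x hx, sq]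
  calc pk G B o hB n x ^ 2 = ∑ pr ∈ P ×ˢ P, ν (E pr) := hsum.symm
    _ = ν (⋃ pr ∈ (P ×ˢ P : Finset _), E pr) :=
        (measure_biUnion_finset hdisj (fun pr _ => hmeas pr)).symm
    _ ≤ ν {ω | ω n = (some x, some x)} := by
        apply measure_mono
        exact Set.iUnion₂_subset hsub

lemma sum_sq_le_meas_coll (ν : Measure (ℕ → Option V × Option V))
    (hν : IsKilledPairLaw G B o o ν) (hoB : o ∈ B) (n : ℕ) :
    ∑ x ∈ hB.toFinset, pk G B o hB n x ^ 2
      ≤ ν {ω | ∃ x ∈ B, (ω n).1 = some x ∧ (ω n).2 = some x} := by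
  classical
  set F : V → Set (ℕ → Option V × Option V) := fun x => {ω | ω n = (some x, some x)} with hF
  have hdisj : Set.PairwiseDisjoint (hB.toFinset : Set V) F := by
    intro a ha b hb hne
    rw [Function.onFun, Set.disjoint_left]
    intro ω hωa hωb
    apply hne
    have : (some a, some a) = ((some b : Option V), (some b : Option V)) := by
      rw [← hωa, ← hωb]
    exact Option.some_injective V ((Prod.mk.injEq _ _ _ _).mp this).1
  calc ∑ x ∈ hB.toFinset, pk G B o hB n x ^ 2
      ≤ ∑ x ∈ hB.toFinset, ν (F x) := by
        apply Finset.sum_le_sum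
        intro x hx
        exact sq_le_meas G B o hB ν hν hoB n x (hB.mem_toFinset.mp hx)
    _ = ν (⋃ x ∈ hB.toFinset, F x) :=
        (measure_biUnion_finset hdisj (fun x _ => meas_eventAt n _)).symm
    _ ≤ ν {ω | ∃ x ∈ B, (ω n).1 = some x ∧ (ω n).2 = some x} := by
        apply measure_mono
        apply Set.iUnion₂_subset
        intro x hx ω hω
        exact ⟨x, hB.mem_toFinset.mp hx, by rw [show ω n = (some x, some x) from hω], by
          rw [show ω n = (some x, some x) from hω]⟩

lemma meas_collSet (hBf : B.Finite) (n : ℕ) :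
    MeasurableSet {ω : ℕ → Option V × Option V | ∃ x ∈ B, (ω n).1 = some x ∧ (ω n).2 = some x} := by
  have h : {ω : ℕ → Option V × Option V | ∃ x ∈ B, (ω n).1 = some x ∧ (ω n).2 = some x}
      = ⋃ x ∈ hBf.toFinset, {ω : ℕ → Option V × Option V | ω n = (some x, some x)} := by
    ext ω
    simp only [Set.mem_setOf_eq, Set.mem_iUnion, Set.Finite.mem_toFinset]
    constructor
    · rintro ⟨x, hx, h1, h2⟩
      exact ⟨x, hx, Prod.ext h1 h2⟩
    · rintro ⟨x, hx, h1⟩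
      exact ⟨x, hx, by rw [h1], by rw [h1]⟩
  rw [h]
  exact MeasurableSet.biUnion hBf.toFinset.countable_toSet (fun x _ => meas_eventAt n _)

lemma T_le_lintegral (ν : Measure (ℕ → Option V × Option V))
    (hν : IsKilledPairLaw G B o o ν) (hoB : o ∈ B) :
    ∑' n, ∑ x ∈ hB.toFinset, pk G B o hB n x ^ 2 ≤ ∫⁻ ω, collisions B ω ∂ν := by
  classical
  set S : ℕ → Set (ℕ → Option V × Option V) :=
    fun n => {ω' | ∃ x ∈ B, (ω' n).1 = some x ∧ (ω' n).2 = some x} with hS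
  have hmeasS : ∀ n, MeasurableSet (S n) := fun n => meas_collSet B hB n
  have hfun : ∀ (n : ℕ) (ω : ℕ → Option V × Option V),
      (if ∃ x ∈ B, (ω n).1 = some x ∧ (ω n).2 = some x then (1:ℝ≥0∞) else 0)
      = Set.indicator (S n) (fun _ => 1) ω := by
    intro n ω
    rw [Set.indicator_apply]
    congr
  have hcoll : ∫⁻ ω, collisions B ω ∂ν = ∑' n, ν (S n) := by
    unfold collisions
    simp_rw [hfun]
    rw [lintegral_tsum (fun n =>
      (Measurable.indicator measurable_const (hmeasS n)).aemeasurable)]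
    congr 1
    funext n
    rw [lintegral_indicator_const (hmeasS n) 1, one_mul]
  rw [hcoll]
  exact ENNReal.tsum_le_tsum (fun n => sum_sq_le_meas_coll G B o hB ν hν hoB n)

/-! ### Real-valued quantities -/

def dR (x : V) : ℝ := (G.degree x : ℝ)

def kR (y x : V) : ℝ := if G.Adj y x ∧ y ∈ B ∧ x ∈ B then (dR G y)⁻¹ else 0

def qk (n : ℕ) (x : V) : ℝ := (pk G B o hB n x).toReal

lemma qk_nonneg (n : ℕ) (x : V) : 0 ≤ qk G B o hB n x := ENNReal.toReal_nonneg

lemma qk_zero (x : V) : qk G B o hB 0 x = if x = o then 1 else 0 := by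
  rw [qk, pk_zero]
  split <;> simp

lemma killedStep_toReal (y x : V) :
    (killedStep G B (some y) (some x)).toReal = kR G B y x := by
  rw [killedStep_some_some, kR, dR]
  split
  · next h =>
    rw [ENNReal.toReal_inv, ENNReal.toReal_natCast, if_pos ⟨h.2.1, h.1, h.2.2⟩]
  · next h =>
    rw [ENNReal.toReal_zero, if_neg]
    rintro ⟨h1, h2, h3⟩; exact h ⟨h2, h1, h3⟩

lemma kR_nonneg (y x : V) : 0 ≤ kR G B y x := by
  rw [kR]; split
  · rw [dR]; positivity
  · exact le_refl 0

lemma qk_succ (hoB : o ∈ B) (n : ℕ) (x : V) :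
    qk G B o hB (n+1) x = ∑ y ∈ hB.toFinset, qk G B o hB n y * kR G B y x := by
  rw [qk, pk_succ, ENNReal.toReal_sum]
  · apply Finset.sum_congr rfl
    intro y _
    rw [ENNReal.toReal_mul, killedStep_toReal]
    rfl
  · intro y _
    exact ENNReal.mul_ne_top (pk_ne_top G B o hB hoB n y) (killedStep_some_ne_top G B y x)

lemma qk_not_mem (hoB : o ∈ B) (n : ℕ) (x : V) (hx : x ∉ B) : qk G B o hB n x = 0 := by
  rw [qk, pk_not_mem G B o hB hoB n x hx, ENNReal.toReal_zero]

def rr (n m : ℕ) : ℝ := ∑ x ∈ hB.toFinset, qk G B o hB n x * qk G B o hB m x / dR G x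

def rho (k : ℕ) : ℝ := qk G B o hB k o / dR G o

lemma rho_nonneg (k : ℕ) : 0 ≤ rho G B o hB k := by
  rw [rho, dR]
  have := qk_nonneg G B o hB k o
  positivity

lemma rr_nonneg (n m : ℕ) : 0 ≤ rr G B o hB n m := by
  apply Finset.sum_nonneg
  intro x _
  have h1 := qk_nonneg G B o hB n x
  have h2 := qk_nonneg G B o hB m x
  rw [dR]
  positivity

lemma rr_symm (n m : ℕ) : rr G B o hB n m = rr G B o hB m n := by
  apply Finset.sum_congr rfl
  intro x _
  rw [mul_comm (qk G B o hB n x)]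

lemma rr_zero (hoB : o ∈ B) (n : ℕ) : rr G B o hB n 0 = rho G B o hB n := by
  rw [rr, rho]
  rw [Finset.sum_eq_single o]
  · rw [qk_zero, if_pos rfl, mul_one]
  · intro y _ hy
    rw [qk_zero, if_neg hy, mul_zero, zero_div]
  · intro h
    exact absurd (hB.mem_toFinset.mpr hoB) h

lemma rr_succ_eq (hoB : o ∈ B) (n m : ℕ) :
    rr G B o hB n (m+1) = ∑ x ∈ hB.toFinset, ∑ y ∈ hB.toFinset,
      qk G B o hB n x * qk G B o hB m y *
        (if G.Adj x y then (dR G x)⁻¹ * (dR G y)⁻¹ else 0) := by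
  rw [rr]
  apply Finset.sum_congr rfl
  intro x hx
  rw [qk_succ G B o hB hoB m x, Finset.mul_sum, Finset.sum_div]
  apply Finset.sum_congr rfl
  intro y hy
  rw [kR]
  have hxB := hB.mem_toFinset.mp hx
  have hyB := hB.mem_toFinset.mp hy
  by_cases hadj : G.Adj x y
  · rw [if_pos ⟨hadj.symm, hyB, hxB⟩, if_pos hadj]
    field_simp
  · rw [if_neg (fun h => hadj h.1.symm), if_neg hadj]
    simp

lemma rr_succ_symm (hoB : o ∈ B) (n m : ℕ) :
    rr G B o hB n (m+1) = rr G B o hB m (n+1) := by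
  rw [rr_succ_eq G B o hB hoB, rr_succ_eq G B o hB hoB, Finset.sum_comm]
  apply Finset.sum_congr rfl
  intro y _
  apply Finset.sum_congr rfl
  intro x _
  by_cases hadj : G.Adj x y
  · rw [if_pos hadj, if_pos hadj.symm]
    ring
  · rw [if_neg hadj, if_neg (fun h => hadj h.symm)]
    ring

lemma rr_eq_rho (hoB : o ∈ B) (m : ℕ) : ∀ n, rr G B o hB n m = rho G B o hB (n + m) := by
  induction m with
  | zero => intro n; rw [rr_zero G B o hB hoB, Nat.add_zero]
  | succ m ih =>
    intro n
    rw [rr_succ_symm G B o hB hoB, rr_symm, ih (n+1)]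
    congr 1
    omega

lemma dR_pos (hd : ∀ x : V, 0 < G.degree x) (x : V) : 0 < dR G x := by
  rw [dR]
  exact_mod_cast hd x

lemma rr_diag_succ_le (hd : ∀ x : V, 0 < G.degree x) (hoB : o ∈ B) (m : ℕ) :
    rr G B o hB (m+1) (m+1) ≤ rr G B o hB m m := by
  classical
  have stepA : ∀ x ∈ hB.toFinset, qk G B o hB (m+1) x ^ 2
      ≤ dR G x * ∑ y ∈ hB.toFinset,
          (if G.Adj y x then (qk G B o hB m y / dR G y) ^ 2 else 0) := by
    intro x hx
    set u : V → ℝ := fun y => if G.Adj y x ∧ y ∈ B ∧ x ∈ B then 1 else 0 with hu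
    set v : V → ℝ := fun y => if G.Adj y x ∧ y ∈ B ∧ x ∈ B then qk G B o hB m y / dR G y else 0
      with hv
    have huv : qk G B o hB (m+1) x = ∑ y ∈ hB.toFinset, u y * v y := by
      rw [qk_succ G B o hB hoB]
      apply Finset.sum_congr rfl
      intro y _
      simp only [hu, hv, kR]
      by_cases hc : G.Adj y x ∧ y ∈ B ∧ x ∈ B
      · rw [if_pos hc, if_pos hc, if_pos hc, one_mul, div_eq_mul_inv]
      · rw [if_neg hc, if_neg hc, if_neg hc, mul_zero, mul_zero]
    have hcs := Finset.sum_mul_sq_le_sq_mul_sq hB.toFinset u v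
    have hu2 : ∑ y ∈ hB.toFinset, u y ^ 2 ≤ dR G x := by
      have h1 : ∑ y ∈ hB.toFinset, u y ^ 2
          = ((hB.toFinset.filter (fun y => G.Adj y x ∧ y ∈ B ∧ x ∈ B)).card : ℝ) := by
        rw [Finset.card_filter]
        push_cast
        apply Finset.sum_congr rfl
        intro y _
        simp only [hu]
        by_cases hc : G.Adj y x ∧ y ∈ B ∧ x ∈ B <;> simp [hc]
      rw [h1, dR]
      have h2 : (hB.toFinset.filter (fun y => G.Adj y x ∧ y ∈ B ∧ x ∈ B)).card ≤ G.degree x := by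
        rw [← SimpleGraph.card_neighborFinset_eq_degree]
        apply Finset.card_le_card
        intro y hy
        rw [Finset.mem_filter] at hy
        rw [SimpleGraph.mem_neighborFinset]
        exact hy.2.1.symm
      exact_mod_cast h2
    have hv2 : ∑ y ∈ hB.toFinset, v y ^ 2
        ≤ ∑ y ∈ hB.toFinset, (if G.Adj y x then (qk G B o hB m y / dR G y) ^ 2 else 0) := by
      apply Finset.sum_le_sum
      intro y _
      simp only [hv]
      by_cases hc : G.Adj y x ∧ y ∈ B ∧ x ∈ B
      · rw [if_pos hc, if_pos hc.1]
      · rw [if_neg hc]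
        split
        · simpa using sq_nonneg (qk G B o hB m y / dR G y)
        · norm_num
    calc qk G B o hB (m+1) x ^ 2 = (∑ y ∈ hB.toFinset, u y * v y) ^ 2 := by rw [huv]
      _ ≤ (∑ y ∈ hB.toFinset, u y ^ 2) * ∑ y ∈ hB.toFinset, v y ^ 2 := hcs
      _ ≤ dR G x * ∑ y ∈ hB.toFinset,
            (if G.Adj y x then (qk G B o hB m y / dR G y) ^ 2 else 0) := by
        apply mul_le_mul hu2 hv2 (Finset.sum_nonneg fun y _ => sq_nonneg _)
        exact le_of_lt (dR_pos G hd x)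
  calc rr G B o hB (m+1) (m+1)
      = ∑ x ∈ hB.toFinset, qk G B o hB (m+1) x ^ 2 / dR G x := by
        apply Finset.sum_congr rfl
        intro x _
        rw [sq]
    _ ≤ ∑ x ∈ hB.toFinset, ∑ y ∈ hB.toFinset,
          (if G.Adj y x then (qk G B o hB m y / dR G y) ^ 2 else 0) := by
        apply Finset.sum_le_sum
        intro x hx
        rw [div_le_iff₀ (dR_pos G hd x), mul_comm]
        exact stepA x hx
    _ = ∑ y ∈ hB.toFinset, ∑ x ∈ hB.toFinset,
          (if G.Adj y x then (qk G B o hB m y / dR G y) ^ 2 else 0) := Finset.sum_comm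
    _ ≤ ∑ y ∈ hB.toFinset, (qk G B o hB m y / dR G y) ^ 2 * dR G y := by
        apply Finset.sum_le_sum
        intro y _
        have h1 : ∑ x ∈ hB.toFinset, (if G.Adj y x then (qk G B o hB m y / dR G y) ^ 2 else 0)
            = ((hB.toFinset.filter (fun x => G.Adj y x)).card : ℝ)
              * (qk G B o hB m y / dR G y) ^ 2 := by
          rw [← Finset.sum_filter, Finset.sum_const, nsmul_eq_mul]
        rw [h1, mul_comm]
        apply mul_le_mul_of_nonneg_left _ (sq_nonneg _)
        rw [dR]
        have h2 : (hB.toFinset.filter (fun x => G.Adj y x)).card ≤ G.degree y := by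
          rw [← SimpleGraph.card_neighborFinset_eq_degree]
          apply Finset.card_le_card
          intro z hz
          rw [Finset.mem_filter] at hz
          rw [SimpleGraph.mem_neighborFinset]
          exact hz.2
        exact_mod_cast h2
    _ = rr G B o hB m m := by
        apply Finset.sum_congr rfl
        intro y _
        have hdy := dR_pos G hd y
        rw [sq]
        field_simp

lemma rho_even_le (hd : ∀ x : V, 0 < G.degree x) (hoB : o ∈ B) (m : ℕ) :
    rho G B o hB (2*(m+1)) ≤ rho G B o hB (2*m) := by
  have h1 := rr_eq_rho G B o hB hoB (m+1) (m+1)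
  have h2 := rr_eq_rho G B o hB hoB m m
  have h3 := rr_diag_succ_le G B o hB hd hoB m
  rw [h1, h2] at h3
  have e1 : m + 1 + (m + 1) = 2*(m+1) := by omega
  have e2 : m + m = 2*m := by omega
  rw [e1, e2] at h3
  exact h3

lemma rho_odd_le (hd : ∀ x : V, 0 < G.degree x) (hoB : o ∈ B) (m : ℕ) :
    rho G B o hB (2*m+1) ≤ rho G B o hB (2*m) := by
  classical
  set a := rho G B o hB (2*m+1) with ha
  set b := rho G B o hB (2*m) with hb
  have hcs : a ^ 2 ≤ b * rr G B o hB (m+1) (m+1) := by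
    have h1 : a = rr G B o hB m (m+1) := by
      rw [ha, rr_eq_rho G B o hB hoB (m+1) m]
      congr 1
      omega
    have h2 : b = rr G B o hB m m := by
      rw [hb, rr_eq_rho G B o hB hoB m m]
      congr 1
      omega
    set ff : V → ℝ := fun x => qk G B o hB m x / Real.sqrt (dR G x) with hff
    set gg : V → ℝ := fun x => qk G B o hB (m+1) x / Real.sqrt (dR G x) with hgg
    have hfg : ∀ x ∈ hB.toFinset, ff x * gg x
        = qk G B o hB m x * qk G B o hB (m+1) x / dR G x := by
      intro x _
      rw [hff, hgg, div_mul_div_comm, Real.mul_self_sqrt (le_of_lt (dR_pos G hd x))]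
    have hf2 : ∀ x ∈ hB.toFinset, ff x ^ 2 = qk G B o hB m x * qk G B o hB m x / dR G x := by
      intro x _
      rw [hff, div_pow, Real.sq_sqrt (le_of_lt (dR_pos G hd x)), sq]
    have hg2 : ∀ x ∈ hB.toFinset, gg x ^ 2
        = qk G B o hB (m+1) x * qk G B o hB (m+1) x / dR G x := by
      intro x _
      rw [hgg, div_pow, Real.sq_sqrt (le_of_lt (dR_pos G hd x)), sq]
    have := Finset.sum_mul_sq_le_sq_mul_sq hB.toFinset ff gg
    rw [Finset.sum_congr rfl hfg, Finset.sum_congr rfl hf2, Finset.sum_congr rfl hg2] at this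
    rw [h1, h2]
    exact this
  have h4 := rr_diag_succ_le G B o hB hd hoB m
  have h5 : rr G B o hB m m = b := by
    rw [hb, rr_eq_rho G B o hB hoB m m]
    congr 1
    omega
  rw [h5] at h4
  have hb0 : 0 ≤ b := rho_nonneg G B o hB (2*m)
  have ha0 : 0 ≤ a := rho_nonneg G B o hB (2*m+1)
  nlinarith [hcs, h4, hb0, ha0]

lemma sum_rho_le (hd : ∀ x : V, 0 < G.degree x) (hoB : o ∈ B) (N : ℕ) :
    ∑ k ∈ Finset.range N, rho G B o hB k ≤ 2 * ∑ j ∈ Finset.range N, rho G B o hB (2*j) := by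
  have heven : ∀ M, ∑ k ∈ Finset.range (2*M), rho G B o hB k
      ≤ 2 * ∑ j ∈ Finset.range M, rho G B o hB (2*j) := by
    intro M
    induction M with
    | zero => simp
    | succ M ih =>
      have e1 : 2*(M+1) = (2*M+1)+1 := by omega
      rw [e1, Finset.sum_range_succ, Finset.sum_range_succ, Finset.sum_range_succ]
      have := rho_odd_le G B o hB hd hoB M
      have h2 : (2*M+1) = 2*M+1 := rfl
      linarith [ih]
  calc ∑ k ∈ Finset.range N, rho G B o hB k ≤ ∑ k ∈ Finset.range (2*N), rho G B o hB k := by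
        apply Finset.sum_le_sum_of_subset_of_nonneg
        · apply Finset.range_subset_range.mpr
          omega
        · intro k _ _
          exact rho_nonneg G B o hB k
    _ ≤ 2 * ∑ j ∈ Finset.range N, rho G B o hB (2*j) := heven N

/-! ### Edge finset and telescoping -/

def NF : Finset V := hB.toFinset ∪ hB.toFinset.biUnion (fun x => G.neighborFinset x)

def ED : Finset (V × V) := (NF G B hB ×ˢ NF G B hB).filter (fun p => G.Adj p.1 p.2)

lemma nbr_subset_NF {x : V} (hx : x ∈ hB.toFinset) : G.neighborFinset x ⊆ NF G B hB := by
  intro y hy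
  rw [NF, Finset.mem_union]
  right
  exact Finset.mem_biUnion.mpr ⟨x, hx, hy⟩

lemma sum_ED_eq (g : V → V → ℝ) (hg : ∀ x y, x ∉ B → g x y = 0) :
    ∑ p ∈ ED G B hB, g p.1 p.2 = ∑ x ∈ hB.toFinset, ∑ y ∈ G.neighborFinset x, g x y := by
  classical
  rw [ED, Finset.sum_filter, Finset.sum_product]
  have hsub : hB.toFinset ⊆ NF G B hB := Finset.subset_union_left
  rw [← Finset.sum_subset hsub
    (fun x _ hx => Finset.sum_eq_zero (fun y _ => by
      rw [hg x y (fun h => hx (hB.mem_toFinset.mpr h))]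
      simp))]
  apply Finset.sum_congr rfl
  intro x hx
  rw [← Finset.sum_filter]
  apply Finset.sum_congr _ (fun y _ => rfl)
  ext y
  rw [Finset.mem_filter, SimpleGraph.mem_neighborFinset]
  constructor
  · rintro ⟨-, h⟩; exact h
  · intro h
    exact ⟨nbr_subset_NF G B hB hx (SimpleGraph.mem_neighborFinset G x y |>.mpr h), h⟩

lemma sum_ED_swap (g : V × V → ℝ) :
    ∑ p ∈ ED G B hB, g p = ∑ p ∈ ED G B hB, g p.swap := by
  classical
  apply Finset.sum_nbij' (i := Prod.swap) (j := Prod.swap)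
  · intro p hp
    rw [ED, Finset.mem_filter, Finset.mem_product] at hp ⊢
    exact ⟨⟨hp.1.2, hp.1.1⟩, hp.2.symm⟩
  · intro p hp
    rw [ED, Finset.mem_filter, Finset.mem_product] at hp ⊢
    exact ⟨⟨hp.1.2, hp.1.1⟩, hp.2.symm⟩
  · intro p _; exact Prod.swap_swap p
  · intro p _; exact Prod.swap_swap p
  · intro p _; rfl

/-- partial Green function divided by degree -/
def vv (N : ℕ) (x : V) : ℝ := (∑ n ∈ Finset.range N, qk G B o hB n x) / dR G x

lemma vv_not_mem (hoB : o ∈ B) (N : ℕ) (x : V) (hx : x ∉ B) : vv G B o hB N x = 0 := by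
  rw [vv]
  rw [Finset.sum_eq_zero (fun n _ => qk_not_mem G B o hB hoB n x hx), zero_div]

lemma nbr_sum_restrict (f : V → ℝ) (hf0 : ∀ x, x ∉ B → f x = 0) (x : V) :
    ∑ y ∈ G.neighborFinset x, f y = ∑ y ∈ hB.toFinset, (if G.Adj x y then f y else 0) := by
  classical
  rw [← Finset.sum_filter]
  refine (Finset.sum_subset_zero_on_sdiff ?_ ?_ ?_).symm
  · intro y hy
    rw [Finset.mem_filter] at hy
    rw [SimpleGraph.mem_neighborFinset]
    exact hy.2
  · intro y hy
    rw [Finset.mem_sdiff, Finset.mem_filter, SimpleGraph.mem_neighborFinset] at hy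
    exact hf0 y (fun hyB => hy.2 ⟨hB.mem_toFinset.mpr hyB, hy.1⟩)
  · intro y _
    rfl

lemma kernel_apply (hd : ∀ x : V, 0 < G.degree x) (hoB : o ∈ B) (n : ℕ) (y : V)
    (hy : y ∈ hB.toFinset) :
    ∑ x ∈ hB.toFinset, (qk G B o hB n x / dR G x) * (if G.Adj x y then 1 else 0)
      = qk G B o hB (n+1) y := by
  rw [qk_succ G B o hB hoB]
  apply Finset.sum_congr rfl
  intro x hx
  rw [kR]
  by_cases hadj : G.Adj x y
  · have hcond : G.Adj x y ∧ x ∈ B ∧ y ∈ B :=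
      ⟨hadj, hB.mem_toFinset.mp hx, hB.mem_toFinset.mp hy⟩
    rw [if_pos hadj, if_pos hcond, mul_one, div_eq_mul_inv]
  · have hcond : ¬(G.Adj x y ∧ x ∈ B ∧ y ∈ B) := fun h => hadj h.1
    rw [if_neg hadj, if_neg hcond, mul_zero, mul_zero]

lemma step_identity (hd : ∀ x : V, 0 < G.degree x) (hoB : o ∈ B)
    (f : V → ℝ) (hf0 : ∀ x, x ∉ B → f x = 0) (n : ℕ) :
    ∑ x ∈ hB.toFinset, (qk G B o hB n x / dR G x) * (∑ y ∈ G.neighborFinset x, f y)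
      = ∑ y ∈ hB.toFinset, qk G B o hB (n+1) y * f y := by
  classical
  have h1 : ∀ x ∈ hB.toFinset,
      (qk G B o hB n x / dR G x) * (∑ y ∈ G.neighborFinset x, f y)
      = ∑ y ∈ hB.toFinset, ((qk G B o hB n x / dR G x) * (if G.Adj x y then 1 else 0)) * f y := by
    intro x _
    rw [nbr_sum_restrict G B hB f hf0, Finset.mul_sum]
    apply Finset.sum_congr rfl
    intro y _
    by_cases hadj : G.Adj x y
    · rw [if_pos hadj, if_pos hadj, mul_one]
    · rw [if_neg hadj, if_neg hadj]
      simp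
  rw [Finset.sum_congr rfl h1, Finset.sum_comm]
  apply Finset.sum_congr rfl
  intro y hy
  rw [← Finset.sum_mul, kernel_apply G B o hB hd hoB n y hy]

lemma FN_zero (hoB : o ∈ B) (f : V → ℝ) (hf1 : f o = 1) :
    ∑ x ∈ hB.toFinset, qk G B o hB 0 x * f x = 1 := by
  rw [Finset.sum_eq_single o]
  · rw [qk_zero, if_pos rfl, one_mul, hf1]
  · intro y _ hy
    rw [qk_zero, if_neg hy, zero_mul]
  · intro h
    exact absurd (hB.mem_toFinset.mpr hoB) h

lemma telescope (hd : ∀ x : V, 0 < G.degree x) (hoB : o ∈ B)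
    (f : V → ℝ) (hf1 : f o = 1) (hf0 : ∀ x, x ∉ B → f x = 0) (N : ℕ) :
    ∑ p ∈ ED G B hB, vv G B o hB N p.1 * (f p.1 - f p.2)
      = 1 - ∑ x ∈ hB.toFinset, qk G B o hB N x * f x := by
  classical
  have hED : ∑ p ∈ ED G B hB, vv G B o hB N p.1 * (f p.1 - f p.2)
      = ∑ x ∈ hB.toFinset, ∑ y ∈ G.neighborFinset x, vv G B o hB N x * (f x - f y) :=
    sum_ED_eq G B hB (fun a b => vv G B o hB N a * (f a - f b))
      (fun x y hx => by
        show vv G B o hB N x * (f x - f y) = 0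
        rw [vv_not_mem G B o hB hoB N x hx, zero_mul])
  rw [hED]
  have h1 : ∀ x ∈ hB.toFinset,
      ∑ y ∈ G.neighborFinset x, vv G B o hB N x * (f x - f y)
      = ∑ n ∈ Finset.range N, (qk G B o hB n x * f x
          - (qk G B o hB n x / dR G x) * (∑ y ∈ G.neighborFinset x, f y)) := by
    intro x _
    have hdx := (dR_pos G hd x).ne'
    rw [← Finset.mul_sum, Finset.sum_sub_distrib, Finset.sum_const,
      SimpleGraph.card_neighborFinset_eq_degree, vv, Finset.sum_div, Finset.sum_mul]
    apply Finset.sum_congr rfl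
    intro n _
    have hdeg : (G.degree x) • f x = dR G x * f x := by
      rw [nsmul_eq_mul, dR]
    rw [hdeg]
    field_simp
  rw [Finset.sum_congr rfl h1, Finset.sum_comm]
  have h2 : ∀ n ∈ Finset.range N,
      ∑ x ∈ hB.toFinset, (qk G B o hB n x * f x
          - (qk G B o hB n x / dR G x) * (∑ y ∈ G.neighborFinset x, f y))
      = (∑ x ∈ hB.toFinset, qk G B o hB n x * f x)
        - ∑ x ∈ hB.toFinset, qk G B o hB (n+1) x * f x := by
    intro n _
    rw [Finset.sum_sub_distrib, step_identity G B o hB hd hoB f hf0 n]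
  rw [Finset.sum_congr rfl h2,
    Finset.sum_range_sub' (fun n => ∑ x ∈ hB.toFinset, qk G B o hB n x * f x) N,
    FN_zero G B o hB hoB f hf1]

lemma ED_vv_sq (hd : ∀ x : V, 0 < G.degree x) (hoB : o ∈ B) (N : ℕ) :
    ∑ p ∈ ED G B hB, vv G B o hB N p.1 ^ 2
      = ∑ n ∈ Finset.range N, ∑ m ∈ Finset.range N, rho G B o hB (n + m) := by
  classical
  have hED : ∑ p ∈ ED G B hB, vv G B o hB N p.1 ^ 2
      = ∑ x ∈ hB.toFinset, ∑ y ∈ G.neighborFinset x, vv G B o hB N x ^ 2 :=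
    sum_ED_eq G B hB (fun a _ => vv G B o hB N a ^ 2)
      (fun x y hx => by
        show vv G B o hB N x ^ 2 = 0
        rw [vv_not_mem G B o hB hoB N x hx]
        simp)
  rw [hED]
  have h1 : ∀ x ∈ hB.toFinset, ∑ y ∈ G.neighborFinset x, vv G B o hB N x ^ 2
      = ∑ n ∈ Finset.range N, ∑ m ∈ Finset.range N,
          qk G B o hB n x * qk G B o hB m x / dR G x := by
    intro x _
    have hdx := (dR_pos G hd x).ne'
    rw [Finset.sum_const, SimpleGraph.card_neighborFinset_eq_degree, vv, nsmul_eq_mul]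
    have hdeg : (G.degree x : ℝ) = dR G x := rfl
    rw [hdeg, div_pow,
      show (∑ n ∈ Finset.range N, qk G B o hB n x) ^ 2
        = (∑ n ∈ Finset.range N, qk G B o hB n x) * (∑ n ∈ Finset.range N, qk G B o hB n x)
        from sq _,
      Finset.sum_mul_sum]
    rw [Finset.sum_div, Finset.mul_sum]
    apply Finset.sum_congr rfl
    intro n _
    rw [Finset.sum_div, Finset.mul_sum]
    apply Finset.sum_congr rfl
    intro m _
    field_simp
  rw [Finset.sum_congr rfl h1, Finset.sum_comm]
  apply Finset.sum_congr rfl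
  intro n _
  rw [Finset.sum_comm]
  apply Finset.sum_congr rfl
  intro m _
  rw [← rr_eq_rho G B o hB hoB m n, rr]

lemma ED_vv_cross (hd : ∀ x : V, 0 < G.degree x) (hoB : o ∈ B) (N : ℕ) :
    ∑ p ∈ ED G B hB, vv G B o hB N p.1 * vv G B o hB N p.2
      = ∑ n ∈ Finset.range N, ∑ m ∈ Finset.range N, rho G B o hB (n + m + 1) := by
  classical
  have hED : ∑ p ∈ ED G B hB, vv G B o hB N p.1 * vv G B o hB N p.2
      = ∑ x ∈ hB.toFinset, ∑ y ∈ G.neighborFinset x, vv G B o hB N x * vv G B o hB N y :=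
    sum_ED_eq G B hB (fun a b => vv G B o hB N a * vv G B o hB N b)
      (fun x y hx => by
        show vv G B o hB N x * vv G B o hB N y = 0
        rw [vv_not_mem G B o hB hoB N x hx, zero_mul])
  rw [hED]
  have h1 : ∀ x ∈ hB.toFinset, ∑ y ∈ G.neighborFinset x, vv G B o hB N x * vv G B o hB N y
      = ∑ n ∈ Finset.range N, ∑ y ∈ hB.toFinset,
          ((qk G B o hB n x / dR G x) * (if G.Adj x y then 1 else 0)) * vv G B o hB N y := by
    intro x _
    rw [← Finset.mul_sum,
      nbr_sum_restrict G B hB (vv G B o hB N) (fun y hy => vv_not_mem G B o hB hoB N y hy)]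
    rw [show vv G B o hB N x = ∑ n ∈ Finset.range N, qk G B o hB n x / dR G x from by
      rw [vv, Finset.sum_div], Finset.sum_mul]
    apply Finset.sum_congr rfl
    intro n _
    rw [Finset.mul_sum]
    apply Finset.sum_congr rfl
    intro y _
    by_cases hadj : G.Adj x y
    · rw [if_pos hadj, if_pos hadj, mul_one]
    · rw [if_neg hadj, if_neg hadj]
      simp
  rw [Finset.sum_congr rfl h1, Finset.sum_comm]
  apply Finset.sum_congr rfl
  intro n _
  have h2 : ∑ x ∈ hB.toFinset, ∑ y ∈ hB.toFinset,
        ((qk G B o hB n x / dR G x) * (if G.Adj x y then 1 else 0)) * vv G B o hB N y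
      = ∑ y ∈ hB.toFinset, qk G B o hB (n+1) y * vv G B o hB N y := by
    rw [Finset.sum_comm]
    apply Finset.sum_congr rfl
    intro y hy
    rw [← Finset.sum_mul, kernel_apply G B o hB hd hoB n y hy]
  rw [h2]
  have h3 : ∀ y ∈ hB.toFinset, qk G B o hB (n+1) y * vv G B o hB N y
      = ∑ m ∈ Finset.range N, qk G B o hB m y * qk G B o hB (n+1) y / dR G y := by
    intro y _
    rw [vv, Finset.sum_div, Finset.mul_sum]
    apply Finset.sum_congr rfl
    intro m _
    ring
  rw [Finset.sum_congr rfl h3, Finset.sum_comm]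
  apply Finset.sum_congr rfl
  intro m _
  rw [← rr, rr_eq_rho G B o hB hoB (n+1) m]
  congr 1
  omega

lemma ED_vv_energy_le (hd : ∀ x : V, 0 < G.degree x) (hoB : o ∈ B) (N : ℕ) :
    ∑ p ∈ ED G B hB, (vv G B o hB N p.1 - vv G B o hB N p.2) ^ 2
      ≤ 4 * ∑ j ∈ Finset.range N, ∑ x ∈ hB.toFinset, qk G B o hB j x ^ 2 := by
  classical
  have hswap : ∑ p ∈ ED G B hB, vv G B o hB N p.2 ^ 2
      = ∑ p ∈ ED G B hB, vv G B o hB N p.1 ^ 2 :=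
    (sum_ED_swap G B hB (fun p => vv G B o hB N p.2 ^ 2))
  have hexp : ∑ p ∈ ED G B hB, (vv G B o hB N p.1 - vv G B o hB N p.2) ^ 2
      = 2 * ∑ p ∈ ED G B hB, vv G B o hB N p.1 ^ 2
        - 2 * ∑ p ∈ ED G B hB, vv G B o hB N p.1 * vv G B o hB N p.2 := by
    have h1 : ∀ p ∈ ED G B hB, (vv G B o hB N p.1 - vv G B o hB N p.2) ^ 2
        = vv G B o hB N p.1 ^ 2 + vv G B o hB N p.2 ^ 2
          - 2 * (vv G B o hB N p.1 * vv G B o hB N p.2) := by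
      intro p _
      ring
    rw [Finset.sum_congr rfl h1, Finset.sum_sub_distrib, Finset.sum_add_distrib, hswap,
      ← Finset.mul_sum]
    ring
  rw [hexp, ED_vv_sq G B o hB hd hoB N, ED_vv_cross G B o hB hd hoB N]
  have htel : ∑ n ∈ Finset.range N, ∑ m ∈ Finset.range N, rho G B o hB (n + m)
      - ∑ n ∈ Finset.range N, ∑ m ∈ Finset.range N, rho G B o hB (n + m + 1)
      = ∑ n ∈ Finset.range N, (rho G B o hB n - rho G B o hB (n + N)) := by
    rw [← Finset.sum_sub_distrib]
    apply Finset.sum_congr rfl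
    intro n _
    rw [← Finset.sum_sub_distrib]
    calc ∑ m ∈ Finset.range N, (rho G B o hB (n + m) - rho G B o hB (n + m + 1))
        = ∑ m ∈ Finset.range N, (rho G B o hB (n + m) - rho G B o hB (n + (m + 1))) := by
          apply Finset.sum_congr rfl
          intro m _
          rfl
      _ = rho G B o hB (n + 0) - rho G B o hB (n + N) :=
          Finset.sum_range_sub' (fun m => rho G B o hB (n + m)) N
      _ = rho G B o hB n - rho G B o hB (n + N) := by rw [Nat.add_zero]
  have hb1 : ∑ n ∈ Finset.range N, (rho G B o hB n - rho G B o hB (n + N))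
      ≤ ∑ n ∈ Finset.range N, rho G B o hB n := by
    apply Finset.sum_le_sum
    intro n _
    have := rho_nonneg G B o hB (n + N)
    linarith
  have hb2 : ∑ n ∈ Finset.range N, rho G B o hB n
      ≤ 2 * ∑ j ∈ Finset.range N, rho G B o hB (2*j) := sum_rho_le G B o hB hd hoB N
  have hb3 : ∑ j ∈ Finset.range N, rho G B o hB (2*j)
      ≤ ∑ j ∈ Finset.range N, ∑ x ∈ hB.toFinset, qk G B o hB j x ^ 2 := by
    apply Finset.sum_le_sum
    intro j _
    rw [show rho G B o hB (2*j) = rr G B o hB j j from by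
      rw [rr_eq_rho G B o hB hoB j j]; congr 1; omega]
    rw [rr]
    apply Finset.sum_le_sum
    intro x _
    rw [← sq]
    apply div_le_self (sq_nonneg _)
    rw [dR]
    have := hd x
    exact_mod_cast this
  linarith

lemma ED_antisym (hoB : o ∈ B) (f : V → ℝ) (N : ℕ) :
    ∑ p ∈ ED G B hB, (vv G B o hB N p.1 - vv G B o hB N p.2) * (f p.1 - f p.2)
      = 2 * ∑ p ∈ ED G B hB, vv G B o hB N p.1 * (f p.1 - f p.2) := by
  classical
  have hswap := sum_ED_swap G B hB (fun p => vv G B o hB N p.2 * (f p.1 - f p.2))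
  have h2 : ∑ p ∈ ED G B hB, vv G B o hB N p.2 * (f p.1 - f p.2)
      = - ∑ p ∈ ED G B hB, vv G B o hB N p.1 * (f p.1 - f p.2) := by
    rw [hswap, ← Finset.sum_neg_distrib]
    apply Finset.sum_congr rfl
    intro p _
    show vv G B o hB N p.swap.2 * (f p.swap.1 - f p.swap.2)
      = -(vv G B o hB N p.1 * (f p.1 - f p.2))
    rw [Prod.snd_swap, Prod.fst_swap]
    ring
  have h1 : ∑ p ∈ ED G B hB, (vv G B o hB N p.1 - vv G B o hB N p.2) * (f p.1 - f p.2)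
      = ∑ p ∈ ED G B hB, vv G B o hB N p.1 * (f p.1 - f p.2)
        - ∑ p ∈ ED G B hB, vv G B o hB N p.2 * (f p.1 - f p.2) := by
    rw [← Finset.sum_sub_distrib]
    apply Finset.sum_congr rfl
    intro p _
    ring
  rw [h1, h2]
  ring

lemma ED_f_energy_le (f : V → ℝ) (hfE : energy G f ≠ ⊤) :
    ∑ p ∈ ED G B hB, (f p.1 - f p.2) ^ 2 ≤ 2 * (energy G f).toReal := by
  classical
  set S : ℝ≥0∞ := ∑' p : V × V, if G.Adj p.1 p.2 then ENNReal.ofReal ((f p.1 - f p.2) ^ 2) else 0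
    with hS
  have hE : energy G f = (1/2 : ℝ≥0∞) * S := rfl
  have hS_ne : S ≠ ⊤ := by
    intro h
    apply hfE
    rw [hE, h, ENNReal.mul_top (by norm_num)]
  have h2 : ∑ p ∈ ED G B hB, (if G.Adj p.1 p.2 then ENNReal.ofReal ((f p.1 - f p.2) ^ 2) else 0)
      ≤ S := ENNReal.sum_le_tsum _
  have h1 : ∀ p ∈ ED G B hB,
      (if G.Adj p.1 p.2 then ENNReal.ofReal ((f p.1 - f p.2) ^ 2) else 0)
      = ENNReal.ofReal ((f p.1 - f p.2) ^ 2) := by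
    intro p hp
    rw [ED, Finset.mem_filter] at hp
    rw [if_pos hp.2]
  have h3 : ∑ p ∈ ED G B hB, (f p.1 - f p.2) ^ 2
      = (∑ p ∈ ED G B hB,
          (if G.Adj p.1 p.2 then ENNReal.ofReal ((f p.1 - f p.2) ^ 2) else 0)).toReal := by
    rw [Finset.sum_congr rfl h1, ENNReal.toReal_sum (fun p _ => ENNReal.ofReal_ne_top)]
    apply Finset.sum_congr rfl
    intro p _
    rw [ENNReal.toReal_ofReal (sq_nonneg _)]
  have h4 : S.toReal = 2 * (energy G f).toReal := by
    rw [hE, ENNReal.toReal_mul]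
    have : ((1:ℝ≥0∞)/2).toReal = (1:ℝ)/2 := by
      rw [ENNReal.toReal_div, ENNReal.toReal_one, ENNReal.toReal_ofNat]
    rw [this]
    ring
  rw [h3, ← h4]
  exact ENNReal.toReal_mono hS_ne h2

lemma qk_sq_sum_toReal (hoB : o ∈ B) (N : ℕ) :
    ∑ x ∈ hB.toFinset, qk G B o hB N x ^ 2
      = (∑ x ∈ hB.toFinset, pk G B o hB N x ^ 2).toReal := by
  rw [ENNReal.toReal_sum (fun x _ => ENNReal.pow_ne_top (pk_ne_top G B o hB hoB N x))]
  apply Finset.sum_congr rfl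
  intro x _
  rw [ENNReal.toReal_pow]
  rfl

lemma partial_T_le (hoB : o ∈ B)
    (hT : (∑' n, ∑ x ∈ hB.toFinset, pk G B o hB n x ^ 2) ≠ ⊤) (N : ℕ) :
    ∑ j ∈ Finset.range N, ∑ x ∈ hB.toFinset, qk G B o hB j x ^ 2
      ≤ (∑' n, ∑ x ∈ hB.toFinset, pk G B o hB n x ^ 2).toReal := by
  have h1 : ∑ j ∈ Finset.range N, ∑ x ∈ hB.toFinset, pk G B o hB j x ^ 2
      ≤ ∑' n, ∑ x ∈ hB.toFinset, pk G B o hB n x ^ 2 := ENNReal.sum_le_tsum _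
  have h2 : ∑ j ∈ Finset.range N, ∑ x ∈ hB.toFinset, qk G B o hB j x ^ 2
      = (∑ j ∈ Finset.range N, ∑ x ∈ hB.toFinset, pk G B o hB j x ^ 2).toReal := by
    rw [ENNReal.toReal_sum (fun j _ => by
      apply ne_of_lt
      calc ∑ x ∈ hB.toFinset, pk G B o hB j x ^ 2
          ≤ ∑' n, ∑ x ∈ hB.toFinset, pk G B o hB n x ^ 2 := ENNReal.le_tsum j
        _ < ⊤ := lt_top_iff_ne_top.mpr hT)]
    exact Finset.sum_congr rfl (fun j _ => qk_sq_sum_toReal G B o hB hoB j)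
  rw [h2]
  exact ENNReal.toReal_mono hT h1

lemma tail_small (hoB : o ∈ B)
    (hT : (∑' n, ∑ x ∈ hB.toFinset, pk G B o hB n x ^ 2) ≠ ⊤) :
    ∀ ε : ℝ, 0 < ε → ∃ N, ∑ x ∈ hB.toFinset, qk G B o hB N x ^ 2 ≤ ε := by
  intro ε hε
  have htend := ENNReal.tendsto_atTop_zero_of_tsum_ne_top hT
  rw [ENNReal.tendsto_atTop_zero] at htend
  obtain ⟨N, hN⟩ := htend (ENNReal.ofReal ε) (ENNReal.ofReal_pos.mpr hε)
  refine ⟨N, ?_⟩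
  rw [qk_sq_sum_toReal G B o hB hoB]
  exact ENNReal.toReal_le_of_le_ofReal hε.le (hN N le_rfl)

lemma core (hd : ∀ x : V, 0 < G.degree x) (hoB : o ∈ B) (f : V → ℝ)
    (hfE : energy G f ≠ ⊤) (hf1 : f o = 1) (hf0 : ∀ x, x ∉ B → f x = 0)
    (hT : (∑' n, ∑ x ∈ hB.toFinset, pk G B o hB n x ^ 2) ≠ ⊤) :
    1 ≤ 2 * (∑' n, ∑ x ∈ hB.toFinset, pk G B o hB n x ^ 2).toReal * (energy G f).toReal := by
  classical
  set TR := (∑' n, ∑ x ∈ hB.toFinset, pk G B o hB n x ^ 2).toReal with hTR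
  set EfR := (energy G f).toReal with hEfR
  have hTR0 : 0 ≤ TR := ENNReal.toReal_nonneg
  have hEf0 : 0 ≤ EfR := ENNReal.toReal_nonneg
  have hmain : ∀ N : ℕ, (1 - ∑ x ∈ hB.toFinset, qk G B o hB N x * f x) ^ 2
      ≤ 2 * TR * EfR := by
    intro N
    set FN := ∑ x ∈ hB.toFinset, qk G B o hB N x * f x with hFN
    have h1 := telescope G B o hB hd hoB f hf1 hf0 N
    have h2 := ED_antisym G B o hB hoB f N
    have hcs := Finset.sum_mul_sq_le_sq_mul_sq (ED G B hB)
      (fun p => vv G B o hB N p.1 - vv G B o hB N p.2) (fun p => f p.1 - f p.2)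
    have h3 := ED_vv_energy_le G B o hB hd hoB N
    have h4 := partial_T_le G B o hB hoB hT N
    have h5 := ED_f_energy_le G B hB f hfE
    have hF0 : (0:ℝ) ≤ ∑ p ∈ ED G B hB, (f p.1 - f p.2) ^ 2 :=
      Finset.sum_nonneg (fun p _ => sq_nonneg _)
    have h6 : (∑ p ∈ ED G B hB, (vv G B o hB N p.1 - vv G B o hB N p.2) ^ 2)
        * (∑ p ∈ ED G B hB, (f p.1 - f p.2) ^ 2) ≤ (4 * TR) * (2 * EfR) := by
      apply mul_le_mul (h3.trans (by linarith)) h5 hF0 (by linarith)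
    have e1 : ∑ p ∈ ED G B hB,
        (vv G B o hB N p.1 - vv G B o hB N p.2) * (f p.1 - f p.2) = 2 * (1 - FN) := by
      rw [h2, h1]
    rw [e1] at hcs
    nlinarith [hcs, h6]
  apply _root_.le_of_forall_pos_le_add
  intro ε hε
  set Cf := ∑ x ∈ hB.toFinset, f x ^ 2 with hCf
  have hCf0 : 0 ≤ Cf := Finset.sum_nonneg (fun x _ => sq_nonneg _)
  have hδ : 0 < ε ^ 2 / (4 * (Cf + 1)) := by positivity
  obtain ⟨N, hN⟩ := tail_small G B o hB hoB hT _ hδ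
  set FN := ∑ x ∈ hB.toFinset, qk G B o hB N x * f x with hFN
  have hFN2 : FN ^ 2 ≤ ε ^ 2 / 4 := by
    have hcs2 := Finset.sum_mul_sq_le_sq_mul_sq hB.toFinset (qk G B o hB N) f
    have htN0 : (0:ℝ) ≤ ∑ x ∈ hB.toFinset, qk G B o hB N x ^ 2 :=
      Finset.sum_nonneg (fun x _ => sq_nonneg _)
    have h7 : (∑ x ∈ hB.toFinset, qk G B o hB N x ^ 2) * Cf
        ≤ (ε ^ 2 / (4 * (Cf + 1))) * (Cf + 1) := by
      apply mul_le_mul hN (by linarith) hCf0 hδ.le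
    have h8 : (ε ^ 2 / (4 * (Cf + 1))) * (Cf + 1) = ε ^ 2 / 4 := by
      field_simp
    calc FN ^ 2 ≤ (∑ x ∈ hB.toFinset, qk G B o hB N x ^ 2) * Cf := hcs2
      _ ≤ ε ^ 2 / 4 := by rw [← h8]; exact h7
  have := hmain N
  nlinarith [this, hFN2, hε, sq_nonneg (2 * FN - ε), sq_nonneg (2 * FN + ε), sq_nonneg FN]

end FMRLB

/-- The expected number of collisions of two independent simple
random walks on `G` killed upon exiting `B`, both started at `0`, is at least
`(1/2) R_eff(0, V∖B)`. -/
theorem first_moment_resistance_lower_bound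
    (G : SimpleGraph V) [G.LocallyFinite] (hconn : G.Connected) (hnt : Nontrivial V)
    (o : V) (B : Set V) (hB : B.Finite) (hoB : o ∈ B) (hBV : B ≠ Set.univ)
    (ν : Measure (ℕ → Option V × Option V)) (hν : IsKilledPairLaw G B o o ν) :
    (1 / 2) * effRes G {o} Bᶜ ≤ ∫⁻ ω, collisions B ω ∂ν := by
  classical
  have hd : ∀ x : V, 0 < G.degree x := by
    intro v
    rw [SimpleGraph.degree_pos_iff_exists_adj]
    obtain ⟨u, hu⟩ := exists_ne v
    obtain ⟨p⟩ := hconn v u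
    cases p with
    | nil => exact absurd rfl hu.symm
    | cons h _ => exact ⟨_, h⟩
  set T := ∑' n, ∑ x ∈ hB.toFinset, FMRLB.pk G B o hB n x ^ 2 with hT
  have hTle : T ≤ ∫⁻ ω, collisions B ω ∂ν := FMRLB.T_le_lintegral G B o hB ν hν hoB
  by_cases hTtop : T = ⊤
  · have htop : ∫⁻ ω, collisions B ω ∂ν = ⊤ := top_le_iff.mp (hTtop ▸ hTle)
    rw [htop]
    exact le_top
  · have hkey : ∀ f ∈ {f : V → ℝ | energy G f ≠ ⊤ ∧ (∀ x ∈ ({o} : Set V), f x = 1) ∧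
        ∀ x ∈ Bᶜ, f x = 0}, (2 * T)⁻¹ ≤ energy G f := by
      intro f hf
      obtain ⟨hfE, hf1', hf0'⟩ := hf
      have hcore := FMRLB.core G B o hB hd hoB f hfE (hf1' o rfl)
        (fun x hx => hf0' x hx) hTtop
      have hTR0 : 0 ≤ T.toReal := ENNReal.toReal_nonneg
      have hEf0 : 0 ≤ (energy G f).toReal := ENNReal.toReal_nonneg
      have hTRpos : 0 < T.toReal := by nlinarith
      have hT0 : T ≠ 0 := by
        intro h0
        rw [h0] at hTRpos
        simp at hTRpos
      have h2T_ne_top : (2 : ℝ≥0∞) * T ≠ ⊤ := ENNReal.mul_ne_top (by norm_num) hTtop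
      have h2T_ne_zero : (2 : ℝ≥0∞) * T ≠ 0 := by
        simp [hT0]
      have hinv_ne_top : ((2:ℝ≥0∞) * T)⁻¹ ≠ ⊤ := ENNReal.inv_ne_top.mpr h2T_ne_zero
      rw [← ENNReal.toReal_le_toReal hinv_ne_top hfE]
      rw [ENNReal.toReal_inv, ENNReal.toReal_mul, ENNReal.toReal_ofNat]
      have h2pos : (0:ℝ) < 2 * T.toReal := by linarith
      rw [← one_div, div_le_iff₀ h2pos]
      calc (1:ℝ) ≤ 2 * T.toReal * (energy G f).toReal := hcore
        _ = (energy G f).toReal * (2 * T.toReal) := by ring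
    have hinf : (2 * T)⁻¹ ≤ ⨅ f ∈ {f : V → ℝ | energy G f ≠ ⊤ ∧
        (∀ x ∈ ({o} : Set V), f x = 1) ∧ ∀ x ∈ Bᶜ, f x = 0}, energy G f :=
      le_iInf₂ hkey
    have heff : effRes G {o} Bᶜ ≤ 2 * T := by
      rw [effRes]
      calc (⨅ f ∈ {f : V → ℝ | energy G f ≠ ⊤ ∧
            (∀ x ∈ ({o} : Set V), f x = 1) ∧ ∀ x ∈ Bᶜ, f x = 0}, energy G f)⁻¹
          ≤ ((2 * T)⁻¹)⁻¹ := ENNReal.inv_le_inv' hinf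
        _ = 2 * T := inv_inv _
    calc (1/2) * effRes G {o} Bᶜ ≤ (1/2) * (2 * T) := mul_le_mul_right heff _
      _ = T := by
          rw [← mul_assoc, one_div, ENNReal.inv_mul_cancel (by norm_num) (by norm_num), one_mul]
      _ ≤ ∫⁻ ω, collisions B ω ∂ν := hTle

end
end
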